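/- Let R and S be rings with local units and let U be a Morita duality R-S-bimodule. Then every finitely generated unitary left R-module and every finitely generated unitary right S-module is U-reflexive. Moreover: (a) if R is left locally finite, then for each finitely generated unitary left R-module X, Hom_R(X,U)S is a finitely generated unitary right S-module, and for each finitely generated unitary right S-module Y, RHom_S(Y,U) is a finitely generated unitary left R-module; (b) the same two conclusions hold if S is right locally finite. -/

import Mathlib

set_option linter.unusedVariables false

/-! ### Core: non-unital rings with local units, modules, homomorphisms, categories -/

universe u v w

open MulOpposite CategoryTheory

/-- A ring with local units: every finite subset is contained in a subring
of the form `eRe` for an idempotent `e`; equivalently, every finite subset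
admits an idempotent acting as a two-sided identity on it. -/
class HasLocalUnits (R : Type u) [NonUnitalRing R] : Prop where
  exists_unit : ∀ s : Finset R, ∃ e : R, e * e = e ∧ ∀ x ∈ s, e * x = x ∧ x * e = x

/-- A (left) module over a non-unital ring. -/
class LMod (R : Type u) [NonUnitalRing R] (M : Type v) [AddCommGroup M] extends SMul R M where
  smul_add' : ∀ (r : R) (m n : M), r • (m + n) = r • m + r • n
  add_smul' : ∀ (r s : R) (m : M), (r + s) • m = r • m + s • m
  mul_smul' : ∀ (r s : R) (m : M), (r * s) • m = r • (s • m)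

section basic
variable {R : Type u} [NonUnitalRing R] {M : Type v} [AddCommGroup M] [LMod R M]

theorem LMod.smul_zero' (r : R) : r • (0 : M) = 0 := by
  have h := LMod.smul_add' r (0 : M) 0
  rw [add_zero] at h
  have h2 : r • (0 : M) + r • (0 : M) = r • (0 : M) + 0 := by rw [← h, add_zero]
  exact add_left_cancel h2

theorem LMod.zero_smul' (m : M) : (0 : R) • m = 0 := by
  have h := LMod.add_smul' (0 : R) 0 m
  rw [add_zero] at h
  have h2 : (0 : R) • m + (0 : R) • m = (0 : R) • m + 0 := by rw [← h, add_zero]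
  exact add_left_cancel h2

theorem LMod.smul_neg' (r : R) (m : M) : r • (-m) = -(r • m) := by
  have h : r • m + r • (-m) = 0 := by
    rw [← LMod.smul_add' r m (-m), add_neg_cancel, LMod.smul_zero']
  exact eq_neg_of_add_eq_zero_right h

end basic

/-- `f : M → N` is a homomorphism of (non-unital) `R`-modules. -/
structure IsLHom (R : Type u) [NonUnitalRing R] {M : Type v} {N : Type w}
    [AddCommGroup M] [AddCommGroup N] [LMod R M] [LMod R N] (f : M → N) : Prop where
  map_add : ∀ x y, f (x + y) = f x + f y
  map_smul : ∀ (r : R) (x : M), f (r • x) = r • f x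

theorem IsLHom.map_zero {R : Type u} [NonUnitalRing R] {M : Type v} {N : Type w}
    [AddCommGroup M] [AddCommGroup N] [LMod R M] [LMod R N] {f : M → N}
    (hf : IsLHom R f) : f 0 = 0 := by
  have h := hf.map_add 0 0
  rw [add_zero] at h
  have h2 : f 0 + f 0 = f 0 + 0 := by rw [← h, add_zero]
  exact add_left_cancel h2

theorem IsLHom.map_neg {R : Type u} [NonUnitalRing R] {M : Type v} {N : Type w}
    [AddCommGroup M] [AddCommGroup N] [LMod R M] [LMod R N] {f : M → N}
    (hf : IsLHom R f) (x : M) : f (-x) = -(f x) := by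
  have h : f x + f (-x) = 0 := by rw [← hf.map_add, add_neg_cancel, hf.map_zero]
  exact eq_neg_of_add_eq_zero_right h

/-- The type of homomorphisms of (non-unital) `R`-modules. -/
def LinMap (R : Type u) [NonUnitalRing R] (M : Type v) (N : Type w)
    [AddCommGroup M] [AddCommGroup N] [LMod R M] [LMod R N] : Type (max v w) :=
  {f : M → N // IsLHom R f}

namespace LinMap

variable {R : Type u} [NonUnitalRing R] {M : Type v} {N : Type w}
    [AddCommGroup M] [AddCommGroup N] [LMod R M] [LMod R N]

theorem ext {f g : LinMap R M N} (h : f.1 = g.1) : f = g := Subtype.ext h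

instance : Add (LinMap R M N) :=
  ⟨fun f g => ⟨fun x => f.1 x + g.1 x,
    ⟨fun x y => by rw [f.2.map_add, g.2.map_add]; abel,
     fun r x => by rw [f.2.map_smul, g.2.map_smul, LMod.smul_add']⟩⟩⟩

instance : Zero (LinMap R M N) :=
  ⟨⟨fun _ => 0, ⟨fun _ _ => by rw [add_zero], fun r _ => (LMod.smul_zero' r).symm⟩⟩⟩

instance : Neg (LinMap R M N) :=
  ⟨fun f => ⟨fun x => -(f.1 x),
    ⟨fun x y => by rw [f.2.map_add]; abel,
     fun r x => by rw [f.2.map_smul, LMod.smul_neg']⟩⟩⟩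

instance : AddCommGroup (LinMap R M N) where
  add_assoc f g h := ext (funext fun x => add_assoc _ _ _)
  zero_add f := ext (funext fun x => zero_add _)
  add_zero f := ext (funext fun x => add_zero _)
  add_comm f g := ext (funext fun x => add_comm _ _)
  neg_add_cancel f := ext (funext fun x => neg_add_cancel _)
  nsmul := nsmulRec
  zsmul := zsmulRec

@[simp] theorem add_apply (f g : LinMap R M N) (x : M) : (f + g).1 x = f.1 x + g.1 x := rfl
@[simp] theorem zero_apply (x : M) : (0 : LinMap R M N).1 x = 0 := rfl
@[simp] theorem neg_apply (f : LinMap R M N) (x : M) : (-f).1 x = -(f.1 x) := rfl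

end LinMap

/-- The endomorphism ring of a module over a non-unital ring, with the
"diagrammatic" multiplication `(f * g) x = g (f x)` (i.e. `f * g` means
"first `f`, then `g`", matching homomorphisms written on the right). -/
instance LinMap.instNonUnitalRing {R : Type u} [NonUnitalRing R] {M : Type v}
    [AddCommGroup M] [LMod R M] : NonUnitalRing (LinMap R M M) :=
  { (inferInstance : AddCommGroup (LinMap R M M)) with
    mul := fun f g => ⟨fun x => g.1 (f.1 x),
      ⟨fun x y => by rw [f.2.map_add, g.2.map_add], fun r x => by rw [f.2.map_smul, g.2.map_smul]⟩⟩
    left_distrib := fun f g h => LinMap.ext (funext fun x => rfl)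
    right_distrib := fun f g h => LinMap.ext (funext fun x => h.2.map_add _ _)
    zero_mul := fun f => LinMap.ext (funext fun x => f.2.map_zero)
    mul_zero := fun f => LinMap.ext (funext fun x => rfl)
    mul_assoc := fun f g h => LinMap.ext (funext fun x => rfl) }

@[simp] theorem LinMap.mul_apply {R : Type u} [NonUnitalRing R] {M : Type v}
    [AddCommGroup M] [LMod R M] (f g : LinMap R M M) (x : M) : (f * g).1 x = g.1 (f.1 x) := rfl

/-- A module `M` over a non-unital ring `R` is unitary if `RM = M`. -/
def IsUnitary (R : Type u) [NonUnitalRing R] (M : Type v) [AddCommGroup M] [LMod R M] : Prop :=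
  ∀ m : M, m ∈ AddSubgroup.closure {x : M | ∃ (r : R) (n : M), x = r • n}

/-- The `R`-submodule (as an additive subgroup) generated by a subset. -/
def lspan (R : Type u) [NonUnitalRing R] {M : Type v} [AddCommGroup M] [LMod R M]
    (X : Set M) : AddSubgroup M :=
  AddSubgroup.closure (X ∪ {m | ∃ (r : R) (x : M), x ∈ X ∧ m = r • x})

/-- A subset `A` of a module is finitely generated (as an `R`-submodule). -/
def IsFGSet (R : Type u) [NonUnitalRing R] {M : Type v} [AddCommGroup M] [LMod R M]
    (A : Set M) : Prop :=
  ∃ s : Finset M, (↑s : Set M) ⊆ A ∧ ∀ a ∈ A, a ∈ lspan R (↑s : Set M)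

/-- A finitely generated module over a non-unital ring. -/
def IsFG (R : Type u) [NonUnitalRing R] (M : Type v) [AddCommGroup M] [LMod R M] : Prop :=
  ∃ s : Finset M, ∀ m : M, m ∈ lspan R (↑s : Set M)

/-- The category of unitary left modules over a ring with local units
(objects: unitary left `R`-modules). -/
structure UMod (R : Type u) [NonUnitalRing R] : Type (max u (v + 1)) where
  carrier : Type v
  [grp : AddCommGroup carrier]
  [mod : LMod R carrier]
  unitary : IsUnitary R carrier

attribute [instance] UMod.grp UMod.mod

instance {R : Type u} [NonUnitalRing R] : CoeSort (UMod.{u, v} R) (Type v) := ⟨UMod.carrier⟩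

instance UMod.instCategory {R : Type u} [NonUnitalRing R] : Category (UMod.{u, v} R) where
  Hom M N := LinMap R M.carrier N.carrier
  id M := ⟨fun x => x, ⟨fun _ _ => rfl, fun _ _ => rfl⟩⟩
  comp f g := ⟨fun x => g.1 (f.1 x),
    ⟨fun x y => by rw [f.2.map_add, g.2.map_add], fun r x => by rw [f.2.map_smul, g.2.map_smul]⟩⟩
  id_comp f := LinMap.ext rfl
  comp_id f := LinMap.ext rfl
  assoc f g h := LinMap.ext rfl

@[simp] theorem UMod.comp_apply {R : Type u} [NonUnitalRing R] {M N K : UMod.{u, v} R}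
    (f : M ⟶ N) (g : N ⟶ K) (x : M.carrier) : (f ≫ g).1 x = g.1 (f.1 x) := rfl

@[simp] theorem UMod.id_apply {R : Type u} [NonUnitalRing R] {M : UMod.{u, v} R}
    (x : M.carrier) : (𝟙 M : M ⟶ M).1 x = x := rfl

instance UMod.instPreadditive {R : Type u} [NonUnitalRing R] :
    Preadditive (UMod.{u, v} R) where
  homGroup M N := inferInstanceAs (AddCommGroup (LinMap R M.carrier N.carrier))
  add_comp M N K f f' g := LinMap.ext (funext fun x => g.2.map_add _ _)
  comp_add M N K f g g' := LinMap.ext (funext fun x => rfl)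

/-- A unitary module `P` is a generator of the category of unitary left `R`-modules. -/
def IsGenerator (R : Type u) [NonUnitalRing R] (P : UMod.{u, v} R) : Prop :=
  ∀ (M B : UMod.{u, v} R) (f g : M ⟶ B), f ≠ g → ∃ h : P ⟶ M, h ≫ f ≠ h ≫ g

/-- A set of unitary modules is a cogenerating set for the category of
unitary left `R`-modules. -/
def IsCogenSet (R : Type u) [NonUnitalRing R] (𝒰 : Set (UMod.{u, v} R)) : Prop :=
  ∀ (B M : UMod.{u, v} R) (f g : B ⟶ M), f ≠ g → ∃ U' ∈ 𝒰, ∃ h : M ⟶ U', f ≫ h ≠ g ≫ h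
/-! ### The largest unitary submodule `C·H` of a module `H`, and induced
module structures on hom-groups -/

section umax

variable (C : Type u) [NonUnitalRing C] (H : Type v) [AddCommGroup H] [LMod C H]

/-- `C·H`, the largest unitary `C`-submodule of the `C`-module `H`. -/
def umax : AddSubgroup H :=
  AddSubgroup.closure {h : H | ∃ (c : C) (h' : H), h = c • h'}

variable {C H}

theorem smul_mem_umax (c : C) (h : H) : c • h ∈ umax C H :=
  AddSubgroup.subset_closure ⟨c, h, rfl⟩

/-- An additive, `C`-equivariant map carries `C·H` into `C·H'`. -/
theorem umax_mapsTo {H' : Type w} [AddCommGroup H'] [LMod C H'] (T : H → H')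
    (hadd : ∀ x y, T (x + y) = T x + T y) (hsmul : ∀ (c : C) (x : H), T (c • x) = c • T x)
    {h : H} (hh : h ∈ umax C H) : T h ∈ umax C H' := by
  have hT : IsLHom C T := ⟨hadd, hsmul⟩
  induction hh using AddSubgroup.closure_induction with
  | mem x hx =>
    obtain ⟨c, h', rfl⟩ := hx
    rw [hsmul]; exact smul_mem_umax c (T h')
  | zero => rw [hT.map_zero]; exact (umax C H').zero_mem
  | add x y hx hy ihx ihy => rw [hadd]; exact (umax C H').add_mem ihx ihy
  | neg x hx ihx => rw [hT.map_neg]; exact (umax C H').neg_mem ihx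

instance umax.instLMod : LMod C ↥(umax C H) where
  smul c h := ⟨c • h.1, smul_mem_umax c h.1⟩
  smul_add' c m n := Subtype.ext (LMod.smul_add' c m.1 n.1)
  add_smul' c c' m := Subtype.ext (LMod.add_smul' c c' m.1)
  mul_smul' c c' m := Subtype.ext (LMod.mul_smul' c c' m.1)

@[simp] theorem umax.smul_coe (c : C) (h : ↥(umax C H)) : (c • h).1 = c • h.1 := rfl

/-- If a second ring `D` acts on `H` commuting with the `C`-action,
then `C·H` is stable under the `D`-action. -/
theorem umax_stable {D : Type w} [NonUnitalRing D] [LMod D H] [SMulCommClass C D H]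
    (d : D) {h : H} (hh : h ∈ umax C H) : d • h ∈ umax C H :=
  umax_mapsTo (fun x => d • x) (fun x y => LMod.smul_add' d x y)
    (fun c x => (smul_comm c d x).symm) hh

instance umax.instLMod₂ {D : Type w} [NonUnitalRing D] [LMod D H] [SMulCommClass C D H] :
    LMod D ↥(umax C H) where
  smul d h := ⟨d • h.1, umax_stable d h.2⟩
  smul_add' d m n := Subtype.ext (LMod.smul_add' d m.1 n.1)
  add_smul' d d' m := Subtype.ext (LMod.add_smul' d d' m.1)
  mul_smul' d d' m := Subtype.ext (LMod.mul_smul' d d' m.1)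

instance umax.instSMulCommClass {D : Type w} [NonUnitalRing D] [LMod D H]
    [SMulCommClass C D H] : SMulCommClass C D ↥(umax C H) :=
  ⟨fun c d h => Subtype.ext (smul_comm c d h.1)⟩

/-- If `C` has local units, then `C·H` is a unitary `C`-module. -/
theorem umax_unitary [HasLocalUnits C] : IsUnitary C ↥(umax C H) := by
  intro m
  obtain ⟨h, hh⟩ := m
  induction hh using AddSubgroup.closure_induction with
  | mem x hx =>
    obtain ⟨c, h', rfl⟩ := hx
    obtain ⟨e, he, hec⟩ := HasLocalUnits.exists_unit {c}
    have hc := (hec c (Finset.mem_singleton_self c)).1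
    refine AddSubgroup.subset_closure ⟨e, ⟨c • h', smul_mem_umax c h'⟩, ?_⟩
    refine Subtype.ext ?_
    show c • h' = e • (c • h')
    rw [← LMod.mul_smul', hc]
  | zero =>
    have : (⟨(0 : H), (umax C H).zero_mem⟩ : ↥(umax C H)) = 0 := rfl
    rw [this]; exact AddSubgroup.zero_mem _
  | add x y hx hy ihx ihy =>
    have : (⟨x + y, (umax C H).add_mem hx hy⟩ : ↥(umax C H)) =
        ⟨x, hx⟩ + ⟨y, hy⟩ := rfl
    rw [this]; exact AddSubgroup.add_mem _ ihx ihy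
  | neg x hx ihx =>
    have : (⟨-x, (umax C H).neg_mem hx⟩ : ↥(umax C H)) = -⟨x, hx⟩ := rfl
    rw [this]; exact AddSubgroup.neg_mem _ ihx

end umax

section regular

variable (R : Type u) [NonUnitalRing R]

/-- The left regular module structure of a non-unital ring on itself. -/
instance NonUnitalRing.instLModSelf : LMod R R where
  smul := (· * ·)
  smul_add' := mul_add
  add_smul' := add_mul
  mul_smul' := mul_assoc

@[simp] theorem NonUnitalRing.smul_def (r s : R) : r • s = r * s := rfl

/-- The right regular module structure, as a left module over the opposite ring. -/
instance NonUnitalRing.instLModSelfOp : LMod Rᵐᵒᵖ R where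
  smul r s := s * r.unop
  smul_add' r m n := add_mul m n r.unop
  add_smul' r r' m := mul_add m r.unop r'.unop
  mul_smul' r r' m := (mul_assoc m r'.unop r.unop).symm

@[simp] theorem NonUnitalRing.op_smul_def (r : Rᵐᵒᵖ) (s : R) : r • s = s * r.unop := rfl

instance : SMulCommClass R Rᵐᵒᵖ R :=
  ⟨fun r s x => by
    show r * (x * s.unop) = (r * x) * s.unop
    rw [mul_assoc]⟩

/-- Local units pass to the opposite ring. -/
instance instHasLocalUnitsOp [HasLocalUnits R] : HasLocalUnits Rᵐᵒᵖ where
  exists_unit s := by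
    classical
    obtain ⟨e, he, h⟩ := HasLocalUnits.exists_unit (R := R) (s.image MulOpposite.unop)
    refine ⟨MulOpposite.op e, by rw [← MulOpposite.op_mul, he], fun x hx => ?_⟩
    have hx' := h x.unop (Finset.mem_image_of_mem MulOpposite.unop hx)
    constructor
    · conv_lhs => rw [← MulOpposite.op_unop x, ← MulOpposite.op_mul, hx'.2, MulOpposite.op_unop]
    · conv_lhs => rw [← MulOpposite.op_unop x, ← MulOpposite.op_mul, hx'.1, MulOpposite.op_unop]

end regular

section homact

variable {A B C : Type u} [NonUnitalRing A] [NonUnitalRing B] [NonUnitalRing C]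
variable {X : Type v} {Y : Type w} [AddCommGroup X] [AddCommGroup Y] [LMod B X] [LMod B Y]

/-- The action of `A` on `Hom_B(X, Y)` by precomposition with the right
`A`-action on `X` (homomorphisms written on the right: `(a • f) x = f (x·a)`). -/
instance LinMap.instLModPre [LMod Aᵐᵒᵖ X] [SMulCommClass B Aᵐᵒᵖ X] :
    LMod A (LinMap B X Y) where
  smul a f := ⟨fun x => f.1 (op a • x),
    ⟨fun x y => by rw [LMod.smul_add', f.2.map_add],
     fun r x => by rw [← smul_comm r (op a) x, f.2.map_smul]⟩⟩
  smul_add' a f g := LinMap.ext rfl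
  add_smul' a a' f := LinMap.ext (funext fun x => by
    show f.1 (op (a + a') • x) = f.1 (op a • x) + f.1 (op a' • x)
    rw [← f.2.map_add, ← LMod.add_smul']
    rfl)
  mul_smul' a a' f := LinMap.ext (funext fun x => by
    show f.1 (op (a * a') • x) = f.1 (op a' • (op a • x))
    rw [← LMod.mul_smul']
    rfl)

theorem LinMap.pre_smul_apply [LMod Aᵐᵒᵖ X] [SMulCommClass B Aᵐᵒᵖ X]
    (a : A) (f : LinMap B X Y) (x : X) : (a • f).1 x = f.1 (op a • x) := rfl

/-- The action of `C` on `Hom_B(X, Y)` by postcomposition with a commuting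
`C`-action on `Y`. -/
instance LinMap.instLModPost [LMod C Y] [SMulCommClass B C Y] :
    LMod C (LinMap B X Y) where
  smul c f := ⟨fun x => c • f.1 x,
    ⟨fun x y => by rw [f.2.map_add, LMod.smul_add'],
     fun r x => by rw [f.2.map_smul]; exact (smul_comm r c (f.1 x)).symm⟩⟩
  smul_add' c f g := LinMap.ext (funext fun x => LMod.smul_add' c (f.1 x) (g.1 x))
  add_smul' c c' f := LinMap.ext (funext fun x => LMod.add_smul' c c' (f.1 x))
  mul_smul' c c' f := LinMap.ext (funext fun x => LMod.mul_smul' c c' (f.1 x))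

theorem LinMap.post_smul_apply [LMod C Y] [SMulCommClass B C Y]
    (c : C) (f : LinMap B X Y) (x : X) : (c • f).1 x = c • (f.1 x) := rfl

/-- Pre- and postcomposition actions on hom-groups commute. -/
instance LinMap.instSMulCommClassPrePost [LMod Aᵐᵒᵖ X] [SMulCommClass B Aᵐᵒᵖ X]
    [LMod C Y] [SMulCommClass B C Y] : SMulCommClass A C (LinMap B X Y) :=
  ⟨fun a c f => LinMap.ext rfl⟩

end homact
/-! ### Split direct systems and direct limits of unitary modules -/

section dirsys

variable (R : Type u) [NonUnitalRing R]

/-- A split direct system of unitary left `R`-modules, indexed by a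
quasi-ordered set `(ι, rel)`: a direct system `(P_i, φ_{ij})` together with
splittings `ψ_{ji} : P_j → P_i` (for `i ≤ j`) such that `φ_{ij} ψ_{ji} = id`
and `ψ_{kj} ψ_{ji} = ψ_{ki}`. -/
structure SplitSystem (ι : Type w) (rel : ι → ι → Prop) : Type (max u w (v + 1)) where
  obj : ι → UMod.{u, v} R
  map : ∀ {i j : ι}, rel i j → (obj i ⟶ obj j)
  split : ∀ {i j : ι}, rel i j → (obj j ⟶ obj i)
  map_self : ∀ {i : ι} (h : rel i i) (x : (obj i).carrier), (map h).1 x = x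
  map_map : ∀ {i j k : ι} (hij : rel i j) (hjk : rel j k) (hik : rel i k)
    (x : (obj i).carrier), (map hjk).1 ((map hij).1 x) = (map hik).1 x
  split_map : ∀ {i j : ι} (h : rel i j) (x : (obj i).carrier),
    (split h).1 ((map h).1 x) = x
  split_split : ∀ {i j k : ι} (hij : rel i j) (hjk : rel j k) (hik : rel i k)
    (x : (obj k).carrier), (split hij).1 ((split hjk).1 x) = (split hik).1 x

/-- `P`, together with homomorphisms `φ_i : P_i → P`, is a direct limit of the
direct system `(P_i, φ_{ij})` (with directed index set): the `φ_i` are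
compatible, every element of `P` comes from some `P_i`, and everything killed
by `φ_i` is eventually killed in the system. -/
structure LimitCocone {ι : Type w} {rel : ι → ι → Prop} (D : SplitSystem.{u, v} R ι rel)
    (P : Type v) [AddCommGroup P] [LMod R P] : Type (max u w v) where
  incl : ∀ i, LinMap R (D.obj i).carrier P
  compat : ∀ {i j : ι} (h : rel i j) (x : (D.obj i).carrier),
    (incl j).1 ((D.map h).1 x) = (incl i).1 x
  exhaustive : ∀ x : P, ∃ (i : ι) (y : (D.obj i).carrier), (incl i).1 y = x
  eventually_zero : ∀ i (y : (D.obj i).carrier), (incl i).1 y = 0 →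
    ∃ j, ∃ h : rel i j, (D.map h).1 y = 0

/-- A unitary left `R`-module is locally projective if it is a direct limit of a
split direct system of finitely generated projective unitary left `R`-modules. -/
def IsLocallyProjective (P : Type v) [AddCommGroup P] [LMod R P] : Prop :=
  ∃ (ι : Type v) (rel : ι → ι → Prop),
    (∀ i, rel i i) ∧ (∀ {i j k}, rel i j → rel j k → rel i k) ∧
    Nonempty ι ∧ (∀ i j, ∃ k, rel i k ∧ rel j k) ∧
    ∃ (D : SplitSystem.{u, v} R ι rel) (_ : LimitCocone R D P),
      ∀ i, IsFG R (D.obj i).carrier ∧ CategoryTheory.Projective (D.obj i)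

variable {R}

/-- The transition maps `Ω_{ij} : End_R(P_i) → End_R(P_j)`, `α ↦ ψ_{ji} α φ_{ij}`,
of the direct system of endomorphism rings associated to a split direct system. -/
def SplitSystem.endTrans {ι : Type w} {rel : ι → ι → Prop}
    (D : SplitSystem.{u, v} R ι rel) {i j : ι} (h : rel i j)
    (a : LinMap R (D.obj i).carrier (D.obj i).carrier) :
    LinMap R (D.obj j).carrier (D.obj j).carrier :=
  ⟨fun x => (D.map h).1 (a.1 ((D.split h).1 x)),
   ⟨fun x y => by rw [(D.split h).2.map_add, a.2.map_add, (D.map h).2.map_add],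
    fun r x => by rw [(D.split h).2.map_smul, a.2.map_smul, (D.map h).2.map_smul]⟩⟩

end dirsys
/-! ### The functor `SHom_R(P,−)` and related constructions for a bimodule `P` -/

section shom

variable (R S : Type u) [NonUnitalRing R] [NonUnitalRing S]
variable (P : Type u) [AddCommGroup P] [LMod R P] [LMod Sᵐᵒᵖ P] [SMulCommClass R Sᵐᵒᵖ P]

/-- `SHom_R(P,M) = S·Hom_R(P,M)`, the largest unitary left `S`-submodule of
`Hom_R(P,M)`, as a type. -/
abbrev SHom (M : Type u) [AddCommGroup M] [LMod R M] : Type u :=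
  ↥(umax S (LinMap R P M))

variable {R S P}

/-- The action of `SHom_R(P,−)` on a homomorphism `g : M → N` (postcomposition). -/
def sHomMap {M N : Type u} [AddCommGroup M] [AddCommGroup N] [LMod R M] [LMod R N]
    (g : LinMap R M N) (α : SHom R S P M) : SHom R S P N :=
  ⟨⟨fun x => g.1 (α.1.1 x),
    ⟨fun x y => by rw [α.1.2.map_add, g.2.map_add],
     fun r x => by rw [α.1.2.map_smul, g.2.map_smul]⟩⟩,
   umax_mapsTo (C := S)
     (fun f => ⟨fun x => g.1 (f.1 x),
       ⟨fun x y => by rw [f.2.map_add, g.2.map_add],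
        fun r x => by rw [f.2.map_smul, g.2.map_smul]⟩⟩)
     (fun f f' => LinMap.ext (funext fun x => g.2.map_add _ _))
     (fun s f => LinMap.ext rfl) α.2⟩

theorem sHomMap_apply {M N : Type u} [AddCommGroup M] [AddCommGroup N] [LMod R M]
    [LMod R N] (g : LinMap R M N) (α : SHom R S P M) (x : P) :
    ((sHomMap g α).1).1 x = g.1 (α.1.1 x) := rfl

theorem sHomMap_add {M N : Type u} [AddCommGroup M] [AddCommGroup N] [LMod R M]
    [LMod R N] (g : LinMap R M N) (α β : SHom R S P M) :
    sHomMap g (α + β) = sHomMap g α + sHomMap g β :=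
  Subtype.ext (LinMap.ext (funext fun x =>
    show g.1 (α.1.1 x + β.1.1 x) = g.1 (α.1.1 x) + g.1 (β.1.1 x) from g.2.map_add _ _))

theorem sHomMap_smul {M N : Type u} [AddCommGroup M] [AddCommGroup N] [LMod R M]
    [LMod R N] (g : LinMap R M N) (s : S) (α : SHom R S P M) :
    sHomMap g (s • α) = s • sHomMap g α :=
  Subtype.ext (LinMap.ext (funext fun x => rfl))

/-- `SHom_R(P,g)` as a homomorphism of `S`-modules. -/
def sHomLin {M N : Type u} [AddCommGroup M] [AddCommGroup N] [LMod R M] [LMod R N]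
    (g : LinMap R M N) : LinMap S (SHom R S P M) (SHom R S P N) :=
  ⟨sHomMap g, ⟨sHomMap_add g, fun s α => sHomMap_smul g s α⟩⟩

variable (R S P)

/-- The functor `SHom_R(P,−)` from unitary left `R`-modules to unitary left
`S`-modules. -/
def sHomF [HasLocalUnits S] : UMod.{u, u} R ⥤ UMod.{u, u} S where
  obj M := ⟨SHom R S P M.carrier, umax_unitary⟩
  map g := sHomLin g
  map_id M := LinMap.ext (funext fun α => Subtype.ext (LinMap.ext (funext fun x => rfl)))
  map_comp f g := LinMap.ext (funext fun α => Subtype.ext (LinMap.ext (funext fun x => rfl)))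

/-- `G_P = SHom_R(P,R)`, an `S`-`R`-bimodule. -/
abbrev GP : Type u := ↥(umax S (LinMap R P R))

/-- `RHom_S(G_P, N) = R·Hom_S(G_P, N)`, as a type. -/
abbrev RHomG (N : Type u) [AddCommGroup N] [LMod S N] : Type u :=
  ↥(umax R (LinMap S (GP R S P) N))

variable {R S P}

/-- The action of `RHom_S(G_P,−)` on a homomorphism of `S`-modules. -/
def rHomGMap {N N' : Type u} [AddCommGroup N] [AddCommGroup N'] [LMod S N] [LMod S N']
    (g : LinMap S N N') (α : RHomG R S P N) : RHomG R S P N' :=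
  ⟨⟨fun β => g.1 (α.1.1 β),
    ⟨fun x y => by rw [α.1.2.map_add, g.2.map_add],
     fun s x => by rw [α.1.2.map_smul, g.2.map_smul]⟩⟩,
   umax_mapsTo (C := R)
     (fun f => ⟨fun β => g.1 (f.1 β),
       ⟨fun x y => by rw [f.2.map_add, g.2.map_add],
        fun s x => by rw [f.2.map_smul, g.2.map_smul]⟩⟩)
     (fun f f' => LinMap.ext (funext fun β => g.2.map_add _ _))
     (fun r f => LinMap.ext rfl) α.2⟩

variable (R S P)

/-- The functor `RHom_S(G_P,−)` from unitary left `S`-modules to unitary left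
`R`-modules. -/
def rHomGF [HasLocalUnits R] : UMod.{u, u} S ⥤ UMod.{u, u} R where
  obj N := ⟨RHomG R S P N.carrier, umax_unitary⟩
  map g := ⟨rHomGMap g,
    ⟨fun α β => Subtype.ext (LinMap.ext (funext fun x =>
       show g.1 (α.1.1 x + β.1.1 x) = g.1 (α.1.1 x) + g.1 (β.1.1 x) from g.2.map_add _ _)),
     fun r α => Subtype.ext (LinMap.ext (funext fun x => rfl))⟩⟩
  map_id N := LinMap.ext (funext fun α => Subtype.ext (LinMap.ext (funext fun x => rfl)))
  map_comp f g := LinMap.ext (funext fun α => Subtype.ext (LinMap.ext (funext fun x => rfl)))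

variable {R S P}

/-- The inner component of the evaluation map `γ`: for `n ∈ N` and
`β ∈ Hom_R(P,R)`, the homomorphism `P → N`, `x ↦ (x)β·n`. -/
def gammaInner {N : Type u} [AddCommGroup N] [LMod R N] (n : N) (β : LinMap R P R) :
    LinMap R P N :=
  ⟨fun x => (β.1 x) • n,
   ⟨fun x y => by rw [β.2.map_add, LMod.add_smul'],
    fun r x => by rw [β.2.map_smul, NonUnitalRing.smul_def, LMod.mul_smul']⟩⟩

theorem gammaInner_mem {N : Type u} [AddCommGroup N] [LMod R N] (n : N)
    {β : LinMap R P R} (hβ : β ∈ umax S (LinMap R P R)) :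
    gammaInner n β ∈ umax S (LinMap R P N) :=
  umax_mapsTo (C := S) (fun β => gammaInner n β)
    (fun β β' => LinMap.ext (funext fun x => LMod.add_smul' _ _ _))
    (fun s β => LinMap.ext rfl) hβ

variable (R S P)

/-- The evaluation map `γ_N : N → RHom_S(G_P, SHom_R(P,N))` (before checking that
its values lie in the unitary part `R·Hom_S(G_P, SHom_R(P,N))`):
`n ↦ (β ↦ (x ↦ (x)β·n))`. -/
def gammaFun (N : Type u) [AddCommGroup N] [LMod R N] (n : N) :
    LinMap S (GP R S P) (SHom R S P N) :=
  ⟨fun β => ⟨gammaInner n β.1, gammaInner_mem n β.2⟩,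
   ⟨fun β β' => Subtype.ext (LinMap.ext (funext fun x => LMod.add_smul' _ _ _)),
    fun s β => Subtype.ext (LinMap.ext rfl)⟩⟩

/-- The `s`-trace `sTr(P,M) = Σ_{g ∈ SHom_R(P,M)} Im g` of `P` in `M`. -/
def sTrSub (M : Type u) [AddCommGroup M] [LMod R M] : AddSubgroup M :=
  AddSubgroup.closure {m : M | ∃ f : LinMap R P M, f ∈ umax S (LinMap R P M) ∧ ∃ x : P, m = f.1 x}

/-- `st_P(M) = 0`: the only `R`-submodule `K ⊆ M` with `SHom_R(P,K) = 0` is the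
zero submodule (equivalently, the sum of all such submodules is zero). -/
def stPZero (M : Type u) [AddCommGroup M] [LMod R M] : Prop :=
  ∀ K : AddSubgroup M, (∀ (r : R) (x : M), x ∈ K → r • x ∈ K) →
    (∀ (s : S) (f : LinMap R P M), (∀ x : P, f.1 x ∈ K) → s • f = 0) →
    ∀ m ∈ K, m = 0

/-- `SHom_R(P,X) = 0`. -/
def sHomZero (X : Type u) [AddCommGroup X] [LMod R X] : Prop :=
  ∀ f : LinMap R P X, f ∈ umax S (LinMap R P X) → f = 0

end shom
/-! ### Bimodules, dual hom functors, reflexivity, Morita duality bimodules,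
finiteness conditions -/

section bimod

variable (R S : Type u) [NonUnitalRing R] [NonUnitalRing S]

/-- A bundled `R`-`S`-bimodule over non-unital rings. -/
structure BimodLU : Type (u + 1) where
  carrier : Type u
  [grp : AddCommGroup carrier]
  [lmod : LMod R carrier]
  [rmod : LMod Sᵐᵒᵖ carrier]
  [comm : SMulCommClass R Sᵐᵒᵖ carrier]
  [comm' : SMulCommClass Sᵐᵒᵖ R carrier]

attribute [instance] BimodLU.grp BimodLU.lmod BimodLU.rmod BimodLU.comm BimodLU.comm'

variable (U : Type u) [AddCommGroup U] [LMod R U] [LMod Sᵐᵒᵖ U] [SMulCommClass R Sᵐᵒᵖ U]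
  [SMulCommClass Sᵐᵒᵖ R U]

/-- The canonical map `μ : S → End_R(U)`, `s ↦ (x ↦ x·s)`. -/
def muMap (s : S) : LinMap R U U :=
  ⟨fun x => op s • x,
   ⟨fun x y => LMod.smul_add' (op s) x y, fun r x => (smul_comm r (op s) x).symm⟩⟩

/-- The canonical map `λ : R → End_S(U)`, `r ↦ (x ↦ r·x)`. -/
def lambdaMap (r : R) : LinMap Sᵐᵒᵖ U U :=
  ⟨fun x => r • x,
   ⟨fun x y => LMod.smul_add' r x y, fun s x => smul_comm r s x⟩⟩

/-- `Hom_R(M,U)S`, the largest unitary right `S`-submodule of `Hom_R(M,U)`,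
as a type (a right `S`-module, i.e. a left `Sᵐᵒᵖ`-module). -/
abbrev DHomL (M : Type u) [AddCommGroup M] [LMod R M] : Type u :=
  ↥(umax Sᵐᵒᵖ (LinMap R M U))

/-- `RHom_S(N,U)`, the largest unitary left `R`-submodule of `Hom_S(N,U)`
for a right `S`-module `N`, as a type. -/
abbrev DHomR (N : Type u) [AddCommGroup N] [LMod Sᵐᵒᵖ N] : Type u :=
  ↥(umax R (LinMap Sᵐᵒᵖ N U))

variable {R S U}

/-- Action of the contravariant functor `Hom_R(−,U)S` on morphisms
(precomposition). -/
def dHomLMap {M N : Type u} [AddCommGroup M] [AddCommGroup N] [LMod R M] [LMod R N]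
    (f : LinMap R M N) (α : DHomL R S U N) : DHomL R S U M :=
  ⟨⟨fun x => α.1.1 (f.1 x),
    ⟨fun x y => by rw [f.2.map_add, α.1.2.map_add],
     fun r x => by rw [f.2.map_smul, α.1.2.map_smul]⟩⟩,
   umax_mapsTo (C := Sᵐᵒᵖ)
     (fun g => ⟨fun x => g.1 (f.1 x),
       ⟨fun x y => by rw [f.2.map_add, g.2.map_add],
        fun r x => by rw [f.2.map_smul, g.2.map_smul]⟩⟩)
     (fun g g' => LinMap.ext rfl) (fun s g => LinMap.ext rfl) α.2⟩

/-- Action of the contravariant functor `RHom_S(−,U)` on morphisms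
(precomposition). -/
def dHomRMap {M N : Type u} [AddCommGroup M] [AddCommGroup N] [LMod Sᵐᵒᵖ M]
    [LMod Sᵐᵒᵖ N] (f : LinMap Sᵐᵒᵖ M N) (α : DHomR R S U N) : DHomR R S U M :=
  ⟨⟨fun x => α.1.1 (f.1 x),
    ⟨fun x y => by rw [f.2.map_add, α.1.2.map_add],
     fun s x => by rw [f.2.map_smul, α.1.2.map_smul]⟩⟩,
   umax_mapsTo (C := R)
     (fun g => ⟨fun x => g.1 (f.1 x),
       ⟨fun x y => by rw [f.2.map_add, g.2.map_add],
        fun s x => by rw [f.2.map_smul, g.2.map_smul]⟩⟩)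
     (fun g g' => LinMap.ext rfl) (fun r g => LinMap.ext rfl) α.2⟩

variable (R S U)

/-- The contravariant functor `Hom_R(−,U)S` from unitary left `R`-modules to
unitary right `S`-modules. -/
def dualL [HasLocalUnits S] : (UMod.{u, u} R)ᵒᵖ ⥤ UMod.{u, u} Sᵐᵒᵖ where
  obj M := ⟨DHomL R S U M.unop.carrier, umax_unitary⟩
  map f := ⟨dHomLMap f.unop,
    ⟨fun α β => Subtype.ext (LinMap.ext (funext fun x => rfl)),
     fun s α => Subtype.ext (LinMap.ext (funext fun x => rfl))⟩⟩
  map_id M := LinMap.ext (funext fun α => Subtype.ext (LinMap.ext (funext fun x => rfl)))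
  map_comp f g := LinMap.ext (funext fun α => Subtype.ext (LinMap.ext (funext fun x => rfl)))

/-- The contravariant functor `RHom_S(−,U)` from unitary right `S`-modules to
unitary left `R`-modules. -/
def dualR [HasLocalUnits R] : (UMod.{u, u} Sᵐᵒᵖ)ᵒᵖ ⥤ UMod.{u, u} R where
  obj N := ⟨DHomR R S U N.unop.carrier, umax_unitary⟩
  map f := ⟨dHomRMap f.unop,
    ⟨fun α β => Subtype.ext (LinMap.ext (funext fun x => rfl)),
     fun r α => Subtype.ext (LinMap.ext (funext fun x => rfl))⟩⟩
  map_id N := LinMap.ext (funext fun α => Subtype.ext (LinMap.ext (funext fun x => rfl)))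
  map_comp f g := LinMap.ext (funext fun α => Subtype.ext (LinMap.ext (funext fun x => rfl)))

/-- The underlying function of the evaluation map
`φ_X : X → RHom_S(Hom_R(X,U)S, U)`, `(x)φ_X : β ↦ (x)β`. -/
def evalFunL (X : Type u) [AddCommGroup X] [LMod R X] (x : X) :
    LinMap Sᵐᵒᵖ (DHomL R S U X) U :=
  ⟨fun β => β.1.1 x, ⟨fun β β' => rfl, fun s β => rfl⟩⟩

/-- A unitary left `R`-module `X` is `U`-reflexive: the evaluation map
`φ_X : X → RHom_S(Hom_R(X,U)S, U)` is an isomorphism. -/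
def IsLReflexive (X : Type u) [AddCommGroup X] [LMod R X] : Prop :=
  ∃ h : ∀ x : X, evalFunL R S U X x ∈ umax R (LinMap Sᵐᵒᵖ (DHomL R S U X) U),
    Function.Bijective (fun x : X => (⟨evalFunL R S U X x, h x⟩ : DHomR R S U (DHomL R S U X)))

/-- The underlying function of the evaluation map
`ψ_Y : Y → Hom_R(RHom_S(Y,U),U)S`, `ψ_Y(y) : α ↦ α(y)`. -/
def evalFunR (Y : Type u) [AddCommGroup Y] [LMod Sᵐᵒᵖ Y] (y : Y) :
    LinMap R (DHomR R S U Y) U :=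
  ⟨fun α => α.1.1 y, ⟨fun α α' => rfl, fun r α => rfl⟩⟩

/-- A unitary right `S`-module `Y` is `U`-reflexive: the evaluation map
`ψ_Y : Y → Hom_R(RHom_S(Y,U),U)S` is an isomorphism. -/
def IsRReflexive (Y : Type u) [AddCommGroup Y] [LMod Sᵐᵒᵖ Y] : Prop :=
  ∃ h : ∀ y : Y, evalFunR R S U Y y ∈ umax Sᵐᵒᵖ (LinMap R (DHomR R S U Y) U),
    Function.Bijective (fun y : Y => (⟨evalFunR R S U Y y, h y⟩ : DHomL R S U (DHomR R S U Y)))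

/-- Properties (I) and (II) of a Morita duality bimodule: `U` is the direct
limit of a split direct system of finitely generated injective unitary left
`R`-modules whose members form a cogenerating set for the category of unitary
left `R`-modules, and `μ : S → End_R(U)` is a monomorphism whose image is
exactly the set of endomorphisms factoring through one of the induced
projections. -/
def SatisfiesI_II : Prop :=
  ∃ (ι : Type u) (rel : ι → ι → Prop),
    (∀ i, rel i i) ∧ (∀ {i j k}, rel i j → rel j k → rel i k) ∧
    Nonempty ι ∧ (∀ i j, ∃ k, rel i k ∧ rel j k) ∧
    ∃ (D : SplitSystem.{u, u} R ι rel) (c : LimitCocone R D U)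
      (proj : ∀ i, LinMap R U (D.obj i).carrier),
      (∀ i, IsFG R (D.obj i).carrier ∧ CategoryTheory.Injective (D.obj i)) ∧
      IsCogenSet R {M | ∃ i, M = D.obj i} ∧
      (∀ i (x : (D.obj i).carrier), (proj i).1 ((c.incl i).1 x) = x) ∧
      (∀ {i j} (h : rel i j) (x : U), (D.split h).1 ((proj j).1 x) = (proj i).1 x) ∧
      Function.Injective (muMap R S U) ∧
      Set.range (muMap R S U) =
        {g : LinMap R U U | ∃ (i : ι) (γ : LinMap R (D.obj i).carrier U),
          g.1 = fun x => γ.1 ((proj i).1 x)}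

/-- Properties (III) and (IV) of a Morita duality bimodule (the right-module
side, dual to (I) and (II)). -/
def SatisfiesIII_IV : Prop :=
  ∃ (ι : Type u) (rel : ι → ι → Prop),
    (∀ i, rel i i) ∧ (∀ {i j k}, rel i j → rel j k → rel i k) ∧
    Nonempty ι ∧ (∀ i j, ∃ k, rel i k ∧ rel j k) ∧
    ∃ (D : SplitSystem.{u, u} Sᵐᵒᵖ ι rel) (c : LimitCocone Sᵐᵒᵖ D U)
      (proj : ∀ i, LinMap Sᵐᵒᵖ U (D.obj i).carrier),
      (∀ i, IsFG Sᵐᵒᵖ (D.obj i).carrier ∧ CategoryTheory.Injective (D.obj i)) ∧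
      IsCogenSet Sᵐᵒᵖ {M | ∃ i, M = D.obj i} ∧
      (∀ i (x : (D.obj i).carrier), (proj i).1 ((c.incl i).1 x) = x) ∧
      (∀ {i j} (h : rel i j) (x : U), (D.split h).1 ((proj j).1 x) = (proj i).1 x) ∧
      Function.Injective (lambdaMap R S U) ∧
      Set.range (lambdaMap R S U) =
        {g : LinMap Sᵐᵒᵖ U U | ∃ (i : ι) (γ : LinMap Sᵐᵒᵖ (D.obj i).carrier U),
          g.1 = fun x => γ.1 ((proj i).1 x)}

/-- A Morita duality `R`-`S`-bimodule. -/
def IsMoritaDualityBimod : Prop :=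
  IsUnitary R U ∧ IsUnitary Sᵐᵒᵖ U ∧ SatisfiesI_II R S U ∧ SatisfiesIII_IV R S U

end bimod

section cats

variable (R : Type u) [NonUnitalRing R]

/-- The category of finitely generated unitary left `R`-modules. -/
abbrev FGMod := CategoryTheory.ObjectProperty.FullSubcategory (fun M : UMod.{u, u} R => IsFG R M.carrier)

/-- The category of finitely generated injective unitary left `R`-modules. -/
abbrev InjFGMod := CategoryTheory.ObjectProperty.FullSubcategory
  (fun M : UMod.{u, u} R => IsFG R M.carrier ∧ CategoryTheory.Injective M)

/-- The category of finitely generated projective unitary left `R`-modules. -/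
abbrev ProjFGMod := CategoryTheory.ObjectProperty.FullSubcategory
  (fun M : UMod.{u, u} R => IsFG R M.carrier ∧ CategoryTheory.Projective M)

/-- There is a duality (an additive contravariant equivalence) between the
categories of finitely generated unitary left `R`-modules and finitely
generated unitary right `S`-modules. -/
def ExistsFGDuality (R S : Type u) [NonUnitalRing R] [NonUnitalRing S] : Prop :=
  ∃ F : (FGMod R)ᵒᵖ ⥤ FGMod Sᵐᵒᵖ, F.Additive ∧ F.IsEquivalence

/-- Bundled ring with local units. -/
structure RingLU : Type (u + 1) where
  carrier : Type u
  [ring : NonUnitalRing carrier]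
  [lu : HasLocalUnits carrier]

attribute [instance] RingLU.ring RingLU.lu

/-- A ring with local units is left Morita if there is a ring `R'` with local
units and a duality from finitely generated unitary left `R`-modules to
finitely generated unitary right `R'`-modules. -/
def IsLeftMorita : Prop :=
  ∃ R' : RingLU.{u}, ExistsFGDuality R R'.carrier

/-- `R` is left locally finite: every finitely generated unitary left
`R`-module has finite length (equivalently, the lengths of chains of
submodules of such a module are bounded). -/
def IsLeftLocallyFinite : Prop :=
  ∀ (M : Type u) [AddCommGroup M] [LMod R M], IsUnitary R M → IsFG R M →
    ∃ n : ℕ, ∀ c : Fin (n + 1) → AddSubgroup M,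
      (∀ i (r : R) x, x ∈ c i → r • x ∈ c i) →
      ¬(∀ i : Fin n, c i.castSucc < c i.succ)

/-- `R` is left locally noetherian: every finitely generated unitary left
`R`-module is noetherian. -/
def IsLeftLocallyNoetherian : Prop :=
  ∀ (M : Type u) [AddCommGroup M] [LMod R M], IsUnitary R M → IsFG R M →
    ∀ c : ℕ → AddSubgroup M, (∀ i (r : R) x, x ∈ c i → r • x ∈ c i) →
      (∀ i, c i ≤ c (i + 1)) → ∃ n, ∀ m, n ≤ m → c m = c n

end cats

section principal

variable (R : Type u) [NonUnitalRing R]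

/-- The principal left ideal `Re` of a non-unital ring, for an element `e`. -/
def principalLeft (e : R) : AddSubgroup R where
  carrier := {y : R | ∃ r : R, y = r * e}
  add_mem' := by
    rintro a b ⟨r, hr⟩ ⟨s, hs⟩
    exact ⟨r + s, by rw [hr, hs, add_mul]⟩
  zero_mem' := ⟨0, by rw [zero_mul]⟩
  neg_mem' := by
    rintro a ⟨r, hr⟩
    exact ⟨-r, by rw [hr, neg_mul]⟩

instance (e : R) : LMod R ↥(principalLeft R e) where
  smul r y := ⟨r * y.1, by obtain ⟨s, hs⟩ := y.2; exact ⟨r * s, by rw [hs, mul_assoc]⟩⟩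
  smul_add' r m n := Subtype.ext (mul_add r m.1 n.1)
  add_smul' r s m := Subtype.ext (add_mul r s m.1)
  mul_smul' r s m := Subtype.ext (mul_assoc r s m.1)

/-- The principal right ideal `fS` of a non-unital ring, as a right module
(left module over the opposite ring). -/
def principalRight (f : R) : AddSubgroup R where
  carrier := {y : R | ∃ s : R, y = f * s}
  add_mem' := by
    rintro a b ⟨r, hr⟩ ⟨s, hs⟩
    exact ⟨r + s, by rw [hr, hs, mul_add]⟩
  zero_mem' := ⟨0, by rw [mul_zero]⟩
  neg_mem' := by
    rintro a ⟨r, hr⟩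
    exact ⟨-r, by rw [hr, mul_neg]⟩

instance (f : R) : LMod Rᵐᵒᵖ ↥(principalRight R f) where
  smul s y := ⟨y.1 * s.unop, by
    obtain ⟨t, ht⟩ := y.2; exact ⟨t * s.unop, by rw [ht, mul_assoc]⟩⟩
  smul_add' s m n := Subtype.ext (add_mul m.1 n.1 s.unop)
  add_smul' s t m := Subtype.ext (mul_add m.1 s.unop t.unop)
  mul_smul' s t m := Subtype.ext (mul_assoc m.1 t.unop s.unop).symm

end principal

section restr

variable (R S : Type u) [NonUnitalRing R] [NonUnitalRing S] [HasLocalUnits R] [HasLocalUnits S]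
variable (U : Type u) [AddCommGroup U] [LMod R U] [LMod Sᵐᵒᵖ U] [SMulCommClass R Sᵐᵒᵖ U]
  [SMulCommClass Sᵐᵒᵖ R U]

/-- The restriction of the contravariant functor `Hom_R(−,U)S` to finitely
generated modules, given that it preserves finite generation. -/
def dualLRestr (hFG : ∀ X : UMod.{u, u} R, IsFG R X.carrier →
    IsFG Sᵐᵒᵖ ((dualL R S U).obj (Opposite.op X)).carrier) :
    (FGMod R)ᵒᵖ ⥤ FGMod Sᵐᵒᵖ :=
  CategoryTheory.ObjectProperty.lift _
    ((CategoryTheory.ObjectProperty.ι _).op ⋙ dualL R S U)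
    (fun X => hFG X.unop.obj X.unop.property)

/-- The restriction of the contravariant functor `RHom_S(−,U)` to finitely
generated modules, given that it preserves finite generation. -/
def dualRRestr (hFG : ∀ Y : UMod.{u, u} Sᵐᵒᵖ, IsFG Sᵐᵒᵖ Y.carrier →
    IsFG R ((dualR R S U).obj (Opposite.op Y)).carrier) :
    (FGMod Sᵐᵒᵖ)ᵒᵖ ⥤ FGMod R :=
  CategoryTheory.ObjectProperty.lift _
    ((CategoryTheory.ObjectProperty.ι _).op ⋙ dualR R S U)
    (fun Y => hFG Y.unop.obj Y.unop.property)

end restr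
/-! ### Direct sums of modules over non-unital rings -/

section dfinsupp

variable {R : Type u} [NonUnitalRing R] {ι : Type v} {β : ι → Type w}
  [∀ i, AddCommGroup (β i)] [∀ i, LMod R (β i)]

/-- Pointwise scalar action on a direct sum. -/
def dfinsuppSMul (r : R) (f : Π₀ i, β i) : Π₀ i, β i :=
  f.mapRange (fun _ x => r • x) (fun _ => LMod.smul_zero' r)

theorem dfinsuppSMul_apply (r : R) (f : Π₀ i, β i) (i : ι) :
    dfinsuppSMul r f i = r • f i := DFinsupp.mapRange_apply _ _ f i

instance DFinsupp.instLMod : LMod R (Π₀ i, β i) where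
  smul := dfinsuppSMul
  smul_add' r f g := by
    ext i
    show dfinsuppSMul r (f + g) i = (dfinsuppSMul r f + dfinsuppSMul r g) i
    rw [DFinsupp.add_apply, dfinsuppSMul_apply, dfinsuppSMul_apply, dfinsuppSMul_apply,
      DFinsupp.add_apply]
    exact LMod.smul_add' r (f i) (g i)
  add_smul' r s f := by
    ext i
    show dfinsuppSMul (r + s) f i = (dfinsuppSMul r f + dfinsuppSMul s f) i
    rw [DFinsupp.add_apply, dfinsuppSMul_apply, dfinsuppSMul_apply, dfinsuppSMul_apply]
    exact LMod.add_smul' r s (f i)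
  mul_smul' r s f := by
    ext i
    show dfinsuppSMul (r * s) f i = dfinsuppSMul r (dfinsuppSMul s f) i
    rw [dfinsuppSMul_apply, dfinsuppSMul_apply, dfinsuppSMul_apply]
    exact LMod.mul_smul' r s (f i)

@[simp] theorem DFinsupp.lmod_smul_apply (r : R) (f : Π₀ i, β i) (i : ι) :
    (r • f) i = r • f i := dfinsuppSMul_apply r f i

end dfinsupp
/-! ### Miscellaneous helpers: submodule stability, `Pf`, traces, sums -/

section extra

variable {R : Type u} [NonUnitalRing R] {M : Type v} [AddCommGroup M] [LMod R M]

theorem closure_smul_stable {s : Set M}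
    (h : ∀ (r : R) (x : M), x ∈ s → r • x ∈ AddSubgroup.closure s) (r : R) {x : M}
    (hx : x ∈ AddSubgroup.closure s) : r • x ∈ AddSubgroup.closure s := by
  induction hx using AddSubgroup.closure_induction with
  | mem y hy => exact h r y hy
  | zero => rw [LMod.smul_zero']; exact AddSubgroup.zero_mem _
  | add y z hy hz ihy ihz => rw [LMod.smul_add']; exact AddSubgroup.add_mem _ ihy ihz
  | neg y hy ihy => rw [LMod.smul_neg']; exact AddSubgroup.neg_mem _ ihy

end extra

section pe

variable (R S : Type u) [NonUnitalRing R] [NonUnitalRing S]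
variable (P : Type u) [AddCommGroup P] [LMod R P] [LMod Sᵐᵒᵖ P] [SMulCommClass R Sᵐᵒᵖ P]

/-- The submodule `Pf = {x·f | x ∈ P}` of `P`, for `f ∈ S`. -/
def peSub (f : S) : AddSubgroup P where
  carrier := Set.range (fun x : P => (op f : Sᵐᵒᵖ) • x)
  add_mem' := by
    rintro a b ⟨x, rfl⟩ ⟨y, rfl⟩
    exact ⟨x + y, LMod.smul_add' (op f) x y⟩
  zero_mem' := ⟨0, LMod.smul_zero' _⟩
  neg_mem' := by
    rintro a ⟨x, rfl⟩
    exact ⟨-x, LMod.smul_neg' (op f) x⟩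

instance (f : S) : LMod R ↥(peSub S P f) where
  smul r y := ⟨r • y.1, by
    obtain ⟨x, hx⟩ := y.2
    exact ⟨r • x, by rw [← hx, smul_comm]⟩⟩
  smul_add' r m n := Subtype.ext (LMod.smul_add' r m.1 n.1)
  add_smul' r s m := Subtype.ext (LMod.add_smul' r s m.1)
  mul_smul' r s m := Subtype.ext (LMod.mul_smul' r s m.1)

variable {R S P} in
theorem sTrSub_smul_stable {M : Type u} [AddCommGroup M] [LMod R M] (r : R) {m : M}
    (hm : m ∈ sTrSub R S P M) : r • m ∈ sTrSub R S P M := by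
  refine closure_smul_stable (fun r' x hx => ?_) r hm
  obtain ⟨g, hg, y, rfl⟩ := hx
  exact AddSubgroup.subset_closure ⟨g, hg, r' • y, (g.2.map_smul r' y).symm⟩

instance (M : Type u) [AddCommGroup M] [LMod R M] : LMod R ↥(sTrSub R S P M) where
  smul r y := ⟨r • y.1, sTrSub_smul_stable r y.2⟩
  smul_add' r m n := Subtype.ext (LMod.smul_add' r m.1 n.1)
  add_smul' r s m := Subtype.ext (LMod.add_smul' r s m.1)
  mul_smul' r s m := Subtype.ext (LMod.mul_smul' r s m.1)

end pe

section sum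

/-- Summation over a direct sum against a family of additive maps
(the canonical map `⊕_I M_i → N`). -/
noncomputable def dfinsuppSum {ι : Type u} {β : ι → Type v} [∀ i, AddCommGroup (β i)]
    {γ : Type w} [AddCommGroup γ] (f : ∀ i, β i →+ γ) (x : Π₀ i, β i) : γ :=
  letI := Classical.decEq ι
  DFinsupp.sumAddHom f x

end sum


/-! ## Auxiliary development for the proof -/

section AuxBasic

universe u1 v1 w1

variable {C : Type u1} [NonUnitalRing C]

theorem IsLHom.map_sub' {M : Type v1} {N : Type w1} [AddCommGroup M] [AddCommGroup N]
    [LMod C M] [LMod C N] {f : M → N} (hf : IsLHom C f) (x y : M) :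
    f (x - y) = f x - f y := by
  rw [sub_eq_add_neg, hf.map_add, hf.map_neg, sub_eq_add_neg]

/-- Every element of the unitary part of a module has an idempotent local unit. -/
theorem exists_unit_of_mem_umax [HasLocalUnits C] {H : Type v1} [AddCommGroup H] [LMod C H]
    {h : H} (hh : h ∈ umax C H) : ∃ e : C, e * e = e ∧ e • h = h := by
  induction hh using AddSubgroup.closure_induction with
  | mem x hx =>
    obtain ⟨c, h', rfl⟩ := hx
    obtain ⟨e, he, hec⟩ := HasLocalUnits.exists_unit {c}
    exact ⟨e, he, by rw [← LMod.mul_smul', (hec c (Finset.mem_singleton_self c)).1]⟩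
  | zero =>
    obtain ⟨e, he, -⟩ := HasLocalUnits.exists_unit (∅ : Finset C)
    exact ⟨e, he, LMod.smul_zero' e⟩
  | add x y hx hy ihx ihy =>
    classical
    obtain ⟨e₁, he₁, hx1⟩ := ihx
    obtain ⟨e₂, he₂, hy2⟩ := ihy
    obtain ⟨e, he, hec⟩ := HasLocalUnits.exists_unit {e₁, e₂}
    refine ⟨e, he, ?_⟩
    have m1 : e₁ ∈ ({e₁, e₂} : Finset C) := Finset.mem_insert_self _ _
    have m2 : e₂ ∈ ({e₁, e₂} : Finset C) := by
      rw [Finset.mem_insert]; exact Or.inr (Finset.mem_singleton_self _)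
    have h1 : e • x = x := by
      conv_lhs => rw [← hx1]
      rw [← LMod.mul_smul', (hec e₁ m1).1, hx1]
    have h2 : e • y = y := by
      conv_lhs => rw [← hy2]
      rw [← LMod.mul_smul', (hec e₂ m2).1, hy2]
    rw [LMod.smul_add', h1, h2]
  | neg x hx ihx =>
    obtain ⟨e, he, hx1⟩ := ihx
    exact ⟨e, he, by rw [LMod.smul_neg', hx1]⟩

theorem IsUnitary.mem_umax {X : Type v1} [AddCommGroup X] [LMod C X]
    (hX : IsUnitary C X) (x : X) : x ∈ umax C X := hX x

theorem exists_unit_of_unitary [HasLocalUnits C] {X : Type v1} [AddCommGroup X] [LMod C X]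
    (hX : IsUnitary C X) (x : X) : ∃ e : C, e * e = e ∧ e • x = x :=
  exists_unit_of_mem_umax (hX x)

theorem lspan_le {M : Type v1} [AddCommGroup M] [LMod C M] {s : Set M} {K : AddSubgroup M}
    (hsK : s ⊆ K) (hK : ∀ (r : C) (x : M), x ∈ K → r • x ∈ K) : lspan C s ≤ K := by
  refine (AddSubgroup.closure_le K).mpr ?_
  rintro x (hx | ⟨r, y, hy, rfl⟩)
  · exact hsK hx
  · exact hK r y (hsK hy)

theorem mem_lspan_self {M : Type v1} [AddCommGroup M] [LMod C M] {s : Set M} {x : M}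
    (hx : x ∈ s) : x ∈ lspan C s :=
  AddSubgroup.subset_closure (Or.inl hx)

theorem lspan_smul_mem {M : Type v1} [AddCommGroup M] [LMod C M] {s : Set M} (r : C) {x : M}
    (hx : x ∈ lspan C s) : r • x ∈ lspan C s := by
  refine closure_smul_stable ?_ r hx
  rintro r' y (hy | ⟨r'', z, hz, rfl⟩)
  · exact AddSubgroup.subset_closure (Or.inr ⟨r', y, hy, rfl⟩)
  · exact AddSubgroup.subset_closure (Or.inr ⟨r' * r'', z, hz, (LMod.mul_smul' r' r'' z).symm⟩)

theorem map_mem_lspan_image {M : Type v1} {N : Type w1} [AddCommGroup M] [AddCommGroup N]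
    [LMod C M] [LMod C N] (f : LinMap C M N) {s : Set M} {x : M}
    (hx : x ∈ lspan C s) : f.1 x ∈ lspan C (f.1 '' s) := by
  induction hx using AddSubgroup.closure_induction with
  | mem y hy =>
    rcases hy with hy | ⟨r, z, hz, rfl⟩
    · exact mem_lspan_self ⟨y, hy, rfl⟩
    · rw [f.2.map_smul]
      exact lspan_smul_mem r (mem_lspan_self ⟨z, hz, rfl⟩)
  | zero => rw [f.2.map_zero]; exact zero_mem _
  | add a b ha hb iha ihb => rw [f.2.map_add]; exact add_mem iha ihb
  | neg a ha iha => rw [f.2.map_neg]; exact neg_mem iha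

theorem isFG_of_surjective {M : Type v1} {N : Type w1} [AddCommGroup M] [AddCommGroup N]
    [LMod C M] [LMod C N] (f : LinMap C M N) (hf : Function.Surjective f.1)
    (hM : IsFG C M) : IsFG C N := by
  classical
  obtain ⟨s, hs⟩ := hM
  refine ⟨s.image f.1, fun n => ?_⟩
  obtain ⟨m, rfl⟩ := hf n
  have := map_mem_lspan_image f (hs m)
  rwa [← Finset.coe_image] at this

theorem isUnitary_of_surjective {M : Type v1} {N : Type w1} [AddCommGroup M] [AddCommGroup N]
    [LMod C M] [LMod C N] (f : LinMap C M N) (hf : Function.Surjective f.1)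
    (hM : IsUnitary C M) : IsUnitary C N := fun n => by
  obtain ⟨m, rfl⟩ := hf n
  exact umax_mapsTo f.1 f.2.map_add f.2.map_smul (hM m)

/-- Inverse of a bijective module homomorphism. -/
noncomputable def linInv {M : Type v1} {N : Type w1} [AddCommGroup M] [AddCommGroup N]
    [LMod C M] [LMod C N] (f : LinMap C M N) (hf : Function.Bijective f.1) :
    LinMap C N M := by
  refine ⟨fun n => (Equiv.ofBijective f.1 hf).symm n,
    ⟨fun x y => hf.injective ?_, fun r x => hf.injective ?_⟩⟩
  · rw [f.2.map_add]
    simp [Equiv.ofBijective_apply_symm_apply]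
  · rw [f.2.map_smul]
    simp [Equiv.ofBijective_apply_symm_apply]

@[simp] theorem linInv_cancel {M : Type v1} {N : Type w1} [AddCommGroup M] [AddCommGroup N]
    [LMod C M] [LMod C N] (f : LinMap C M N) (hf : Function.Bijective f.1) (n : N) :
    f.1 ((linInv f hf).1 n) = n := Equiv.ofBijective_apply_symm_apply f.1 hf n

theorem linInv_surjective {M : Type v1} {N : Type w1} [AddCommGroup M] [AddCommGroup N]
    [LMod C M] [LMod C N] (f : LinMap C M N) (hf : Function.Bijective f.1) :
    Function.Surjective (linInv f hf).1 := fun m => ⟨f.1 m, hf.injective (by simp)⟩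

/-- Module structure on a subgroup stable under the action. -/
def AddSubgroup.lmod {M : Type v1} [AddCommGroup M] [LMod C M] (V : AddSubgroup M)
    (hV : ∀ (r : C) (x : M), x ∈ V → r • x ∈ V) : LMod C ↥V where
  smul r y := ⟨r • y.1, hV r y.1 y.2⟩
  smul_add' r m n := Subtype.ext (LMod.smul_add' r m.1 n.1)
  add_smul' r s m := Subtype.ext (LMod.add_smul' r s m.1)
  mul_smul' r s m := Subtype.ext (LMod.mul_smul' r s m.1)

theorem isUnitary_sub [HasLocalUnits C] {M : Type v1} [AddCommGroup M] [LMod C M]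
    (V : AddSubgroup M) (hV : ∀ (r : C) (x : M), x ∈ V → r • x ∈ V)
    (hM : IsUnitary C M) :
    letI := V.lmod hV
    IsUnitary C ↥V := by
  letI := V.lmod hV
  intro x
  obtain ⟨e, -, he⟩ := exists_unit_of_unitary hM x.1
  have : x = e • x := Subtype.ext he.symm
  rw [this]
  exact AddSubgroup.subset_closure ⟨e, x, rfl⟩

end AuxBasic


section AuxQuot

universe u1 v1 w1

variable {C : Type u1} [NonUnitalRing C]

/-- Module structure on a quotient by a stable subgroup. -/
def quotLMod {M : Type v1} [AddCommGroup M] [LMod C M] (W : AddSubgroup M)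
    (hW : ∀ (r : C) (x : M), x ∈ W → r • x ∈ W) : LMod C (M ⧸ W) where
  smul r := Quotient.map' (fun m => r • m) (by
    intro a b hab
    rw [QuotientAddGroup.leftRel_apply] at hab ⊢
    have : r • (-a + b) ∈ W := hW r _ hab
    rwa [LMod.smul_add', LMod.smul_neg'] at this)
  smul_add' r m n := by
    induction m using Quotient.inductionOn' with
    | h a =>
    induction n using Quotient.inductionOn' with
    | h b =>
    show (QuotientAddGroup.mk (r • (a + b)) : M ⧸ W) =
      QuotientAddGroup.mk (r • a) + QuotientAddGroup.mk (r • b)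
    rw [LMod.smul_add']
    rfl
  add_smul' r s m := by
    induction m using Quotient.inductionOn' with
    | h a =>
    show (QuotientAddGroup.mk ((r + s) • a) : M ⧸ W) =
      QuotientAddGroup.mk (r • a) + QuotientAddGroup.mk (s • a)
    rw [LMod.add_smul']
    rfl
  mul_smul' r s m := by
    induction m using Quotient.inductionOn' with
    | h a =>
    show (QuotientAddGroup.mk ((r * s) • a) : M ⧸ W) = QuotientAddGroup.mk (r • (s • a))
    rw [LMod.mul_smul']

theorem quot_smul_mk {M : Type v1} [AddCommGroup M] [LMod C M] (W : AddSubgroup M)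
    (hW : ∀ (r : C) (x : M), x ∈ W → r • x ∈ W) (r : C) (m : M) :
    letI := quotLMod W hW
    r • (QuotientAddGroup.mk m : M ⧸ W) = QuotientAddGroup.mk (r • m) := by
  letI := quotLMod W hW
  show Quotient.map' _ _ (Quotient.mk'' m) = Quotient.mk'' (r • m)
  rw [Quotient.map'_mk'']

/-- The quotient map as a module homomorphism. -/
def quotMk {M : Type v1} [AddCommGroup M] [LMod C M] (W : AddSubgroup M)
    (hW : ∀ (r : C) (x : M), x ∈ W → r • x ∈ W) :
    letI := quotLMod W hW
    LinMap C M (M ⧸ W) := by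
  letI := quotLMod W hW
  exact ⟨fun m => QuotientAddGroup.mk m,
    ⟨fun x y => rfl, fun r x => (quot_smul_mk W hW r x).symm⟩⟩

theorem quotMk_surjective {M : Type v1} [AddCommGroup M] [LMod C M] (W : AddSubgroup M)
    (hW : ∀ (r : C) (x : M), x ∈ W → r • x ∈ W) :
    Function.Surjective (quotMk W hW).1 := fun q =>
  Quotient.inductionOn' q (fun a => ⟨a, rfl⟩)

end AuxQuot

section AuxPi

universe u1 v1 w1

variable {C : Type u1} [NonUnitalRing C]

instance piLMod {ι : Type v1} {M : ι → Type w1} [∀ i, AddCommGroup (M i)]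
    [∀ i, LMod C (M i)] : LMod C (∀ i, M i) where
  smul r f i := r • f i
  smul_add' r m n := funext fun i => LMod.smul_add' r (m i) (n i)
  add_smul' r s m := funext fun i => LMod.add_smul' r s (m i)
  mul_smul' r s m := funext fun i => LMod.mul_smul' r s (m i)

@[simp] theorem pi_smul_apply {ι : Type v1} {M : ι → Type w1} [∀ i, AddCommGroup (M i)]
    [∀ i, LMod C (M i)] (r : C) (f : ∀ i, M i) (i : ι) : (r • f) i = r • f i := rfl

theorem pi_single_smul {ι : Type v1} [DecidableEq ι] {M : ι → Type w1}
    [∀ i, AddCommGroup (M i)] [∀ i, LMod C (M i)] (j : ι) (r : C) (x : M j) :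
    Pi.single j (r • x) = r • (Pi.single j x : ∀ i, M i) := by
  funext i
  by_cases h : i = j
  · subst h; rw [Pi.single_eq_same, pi_smul_apply, Pi.single_eq_same]
  · rw [Pi.single_eq_of_ne h, pi_smul_apply, Pi.single_eq_of_ne h, LMod.smul_zero']

/-- The `j`-th coordinate projection as a module homomorphism. -/
def piProj {ι : Type v1} {M : ι → Type w1} [∀ i, AddCommGroup (M i)]
    [∀ i, LMod C (M i)] (j : ι) : LinMap C (∀ i, M i) (M j) :=
  ⟨fun f => f j, ⟨fun x y => rfl, fun r x => rfl⟩⟩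

/-- The `j`-th coordinate injection as a module homomorphism. -/
def piSingle {ι : Type v1} [DecidableEq ι] {M : ι → Type w1} [∀ i, AddCommGroup (M i)]
    [∀ i, LMod C (M i)] (j : ι) : LinMap C (M j) (∀ i, M i) :=
  ⟨fun x => Pi.single j x, ⟨fun x y => Pi.single_add j x y, fun r x => pi_single_smul j r x⟩⟩

theorem isUnitary_pi {ι : Type v1} {M : ι → Type w1} [Fintype ι] [DecidableEq ι]
    [∀ i, AddCommGroup (M i)] [∀ i, LMod C (M i)] (h : ∀ i, IsUnitary C (M i)) :
    IsUnitary C (∀ i, M i) := by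
  intro f
  rw [show f = ∑ i, Pi.single i (f i) from (Finset.univ_sum_single f).symm]
  refine AddSubgroup.sum_mem _ (fun i _ => ?_)
  exact umax_mapsTo (Pi.single i) (Pi.single_add i) (fun r x => pi_single_smul i r x)
    (h i (f i))

end AuxPi

section AuxCat

universe u1

variable {A : Type u1} [NonUnitalRing A]

theorem mono_of_injective {M N : UMod.{u1, u1} A} (f : M ⟶ N)
    (hf : Function.Injective f.1) : CategoryTheory.Mono f :=
  ⟨fun {Z} g h w => LinMap.ext (funext fun z => hf (congrFun (congrArg Subtype.val w) z))⟩

theorem reg_unitary (A : Type u1) [NonUnitalRing A] [HasLocalUnits A] : IsUnitary A A :=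
  fun a => by
    obtain ⟨e, -, he⟩ := HasLocalUnits.exists_unit {a}
    have := (he a (Finset.mem_singleton_self a)).1
    exact AddSubgroup.subset_closure ⟨e, a, by rw [NonUnitalRing.smul_def, this]⟩

/-- The ring itself as a unitary left module. -/
abbrev regMod (A : Type u1) [NonUnitalRing A] [HasLocalUnits A] : UMod.{u1, u1} A :=
  ⟨A, reg_unitary A⟩

end AuxCat

section AuxHalf

variable (A B : Type u) [NonUnitalRing A] [NonUnitalRing B]
variable (U : Type u) [AddCommGroup U] [LMod A U] [LMod B U] [SMulCommClass A B U]

/-- `b ∈ B` acting on `U` as an `A`-endomorphism. -/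
def nuMap (b : B) : LinMap A U U :=
  ⟨fun x => b • x, ⟨fun x y => LMod.smul_add' b x y, fun a x => (smul_comm a b x).symm⟩⟩

@[simp] theorem nuMap_apply (b : B) (x : U) : (nuMap A B U b).1 x = b • x := rfl

/-- All the data of one half of a Morita duality bimodule, with the second
ring acting through the opposite-ring action recorded directly. -/
structure HalfData : Type (u + 1) where
  ι : Type u
  rel : ι → ι → Prop
  rrefl : ∀ i, rel i i
  rtrans : ∀ {i j k}, rel i j → rel j k → rel i k
  rne : Nonempty ι
  rdir : ∀ i j, ∃ k, rel i k ∧ rel j k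
  D : SplitSystem.{u, u} A ι rel
  c : LimitCocone A D U
  proj : ∀ i, LinMap A U (D.obj i).carrier
  fg : ∀ i, IsFG A (D.obj i).carrier
  inj : ∀ i, CategoryTheory.Injective (D.obj i)
  cogen : IsCogenSet A {M | ∃ i, M = D.obj i}
  proj_incl : ∀ i x, (proj i).1 ((c.incl i).1 x) = x
  split_proj : ∀ {i j : ι} (h : rel i j) (x : U), (D.split h).1 ((proj j).1 x) = (proj i).1 x
  nu_inj : Function.Injective (nuMap A B U)
  nu_range : Set.range (nuMap A B U) =
    {g : LinMap A U U | ∃ (i : ι) (γ : LinMap A (D.obj i).carrier U),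
      g.1 = fun x => γ.1 ((proj i).1 x)}

variable {A B U}

theorem HalfData.incl_injective (hd : HalfData A B U) (i : hd.ι) :
    Function.Injective (hd.c.incl i).1 := fun x y hxy => by
  have := congrArg (hd.proj i).1 hxy
  rwa [hd.proj_incl, hd.proj_incl] at this

end AuxHalf


set_option linter.unusedSectionVars false

section AuxHalfLemmas

variable {A B : Type u} [NonUnitalRing A] [NonUnitalRing B]
variable {U : Type u} [AddCommGroup U] [LMod A U] [LMod B U] [SMulCommClass A B U]
  [SMulCommClass B A U]

theorem HalfData.finset_upper (hd : HalfData A B U) (s : Finset hd.ι) :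
    ∃ m, ∀ i ∈ s, hd.rel i m := by
  classical
  induction s using Finset.induction with
  | empty =>
    obtain ⟨m⟩ := hd.rne
    exact ⟨m, by simp⟩
  | @insert a s hni ih =>
    obtain ⟨m, hm⟩ := ih
    obtain ⟨k, hak, hmk⟩ := hd.rdir a m
    refine ⟨k, fun i hi => ?_⟩
    rcases Finset.mem_insert.mp hi with rfl | hi
    · exact hak
    · exact hd.rtrans (hm i hi) hmk

/-- The subgroup of `U` of elements fixed by `incl i ∘ proj i`. -/
def HalfData.fix (hd : HalfData A B U) (i : hd.ι) : AddSubgroup U where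
  carrier := {u | (hd.c.incl i).1 ((hd.proj i).1 u) = u}
  add_mem' := by
    intro a b ha hb
    show (hd.c.incl i).1 ((hd.proj i).1 (a + b)) = a + b
    rw [(hd.proj i).2.map_add, (hd.c.incl i).2.map_add, ha, hb]
  zero_mem' := by
    show (hd.c.incl i).1 ((hd.proj i).1 0) = 0
    rw [(hd.proj i).2.map_zero, (hd.c.incl i).2.map_zero]
  neg_mem' := by
    intro a ha
    show (hd.c.incl i).1 ((hd.proj i).1 (-a)) = -a
    rw [(hd.proj i).2.map_neg, (hd.c.incl i).2.map_neg, ha]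

theorem HalfData.fix_smul (hd : HalfData A B U) (i : hd.ι) (r : A) {u : U}
    (hu : u ∈ hd.fix i) : r • u ∈ hd.fix i := by
  show (hd.c.incl i).1 ((hd.proj i).1 (r • u)) = r • u
  rw [(hd.proj i).2.map_smul, (hd.c.incl i).2.map_smul, hu]

theorem HalfData.mem_fix_incl (hd : HalfData A B U) (i : hd.ι)
    (y : (hd.D.obj i).carrier) : (hd.c.incl i).1 y ∈ hd.fix i := by
  show (hd.c.incl i).1 ((hd.proj i).1 ((hd.c.incl i).1 y)) = (hd.c.incl i).1 y
  rw [hd.proj_incl]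

theorem HalfData.fix_apply (hd : HalfData A B U) {i : hd.ι} {u : U} (hu : u ∈ hd.fix i) :
    (hd.c.incl i).1 ((hd.proj i).1 u) = u := hu

theorem HalfData.fix_mono (hd : HalfData A B U) {i j : hd.ι} (h : hd.rel i j) {u : U}
    (hu : u ∈ hd.fix i) : u ∈ hd.fix j := by
  have h1 : (hd.c.incl j).1 ((hd.D.map h).1 ((hd.proj i).1 u)) = u := by
    rw [hd.c.compat h]
    exact hu
  show (hd.c.incl j).1 ((hd.proj j).1 u) = u
  conv_lhs => rw [← h1]
  rw [hd.proj_incl j]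
  exact h1

theorem HalfData.exists_mem_fix (hd : HalfData A B U) (u : U) : ∃ i, u ∈ hd.fix i := by
  obtain ⟨i, y, hy⟩ := hd.c.exhaustive u
  exact ⟨i, by rw [← hy]; exact hd.mem_fix_incl i y⟩

/-- The image of a finitely generated module under a homomorphism to `U` is fixed by
a single induced projection. -/
theorem HalfData.exists_fix_map (hd : HalfData A B U) {M : Type u} [AddCommGroup M]
    [LMod A M] (hM : IsFG A M) (γ : LinMap A M U) : ∃ m, ∀ x : M, γ.1 x ∈ hd.fix m := by
  classical
  obtain ⟨s, hs⟩ := hM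
  have hex : ∀ g : M, ∃ i, γ.1 g ∈ hd.fix i := fun g => hd.exists_mem_fix (γ.1 g)
  choose f hf using hex
  obtain ⟨m, hm⟩ := hd.finset_upper (s.image f)
  refine ⟨m, fun x => ?_⟩
  have hx : x ∈ lspan A (↑s : Set M) := hs x
  let K : AddSubgroup M := (hd.fix m).comap (AddMonoidHom.mk' γ.1 γ.2.map_add)
  have hK : ∀ (r : A) (y : M), y ∈ K → r • y ∈ K := by
    intro r y hy
    show γ.1 (r • y) ∈ hd.fix m
    rw [γ.2.map_smul]
    exact hd.fix_smul m r hy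
  have hsK : (↑s : Set M) ⊆ K := by
    intro g hg
    show γ.1 g ∈ hd.fix m
    exact hd.fix_mono (hm (f g) (Finset.mem_image_of_mem f hg)) (hf g)
  exact lspan_le hsK hK hx

/-- The generic evaluation map into the double dual. -/
def gev {X : Type u} [AddCommGroup X] [LMod A X] (x : X) :
    LinMap B ↥(umax B (LinMap A X U)) U :=
  ⟨fun β => β.1.1 x, ⟨fun β β' => rfl, fun b β => rfl⟩⟩

theorem gev_add {X : Type u} [AddCommGroup X] [LMod A X] (x y : X) :
    gev (A := A) (B := B) (U := U) (x + y) = gev x + gev y :=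
  LinMap.ext (funext fun β => β.1.2.map_add x y)

theorem gev_smul {X : Type u} [AddCommGroup X] [LMod A X] (a : A) (x : X) :
    gev (A := A) (B := B) (U := U) (a • x) = a • gev x :=
  LinMap.ext (funext fun β => β.1.2.map_smul a x)

theorem gev_mem_umax {X : Type u} [AddCommGroup X] [LMod A X] (hX : IsUnitary A X)
    (x : X) :
    gev (A := A) (B := B) (U := U) x ∈ umax A (LinMap B ↥(umax B (LinMap A X U)) U) :=
  umax_mapsTo gev gev_add gev_smul (hX x)

/-- Separation: a nonzero element of a unitary module is detected by the dual. -/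
theorem HalfData.separate (hd : HalfData A B U) [HasLocalUnits A] {X : Type u}
    [AddCommGroup X] [LMod A X] (hX : IsUnitary A X) {x : X} (hx : x ≠ 0) :
    ∃ β : LinMap A X U, β ∈ umax B (LinMap A X U) ∧ β.1 x ≠ 0 := by
  let Xobj : UMod.{u, u} A := ⟨X, hX⟩
  let f : regMod A ⟶ Xobj := ⟨fun a => a • x,
    ⟨fun a b => LMod.add_smul' a b x, fun r a => LMod.mul_smul' r a x⟩⟩
  obtain ⟨e, -, he⟩ := exists_unit_of_unitary hX x
  have hf : f ≠ 0 := by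
    intro hf0
    apply hx
    have h2 : f.1 e = (0 : regMod A ⟶ Xobj).1 e := congrFun (congrArg Subtype.val hf0) e
    have h3 : e • x = 0 := h2
    rw [← he]
    exact h3
  obtain ⟨U', hU', h, hne⟩ := hd.cogen (regMod A) Xobj f 0 hf
  obtain ⟨i, rfl⟩ := hU'
  have hex : ∃ a : A, h.1 (a • x) ≠ 0 := by
    by_contra hall
    push_neg at hall
    apply hne
    refine LinMap.ext (funext fun a => ?_)
    show h.1 (f.1 a) = h.1 ((0 : regMod A ⟶ Xobj).1 a)
    have h0 : h.1 ((0 : regMod A ⟶ Xobj).1 a) = 0 := h.2.map_zero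
    rw [h0]
    exact hall a
  obtain ⟨a, ha⟩ := hex
  have hhx : h.1 x ≠ 0 := by
    intro h0
    apply ha
    rw [h.2.map_smul, h0, LMod.smul_zero']
  let β : LinMap A X U := ⟨fun y => (hd.c.incl i).1 (h.1 y),
    ⟨fun y z => by rw [h.2.map_add, (hd.c.incl i).2.map_add],
     fun r y => by rw [h.2.map_smul, (hd.c.incl i).2.map_smul]⟩⟩
  refine ⟨β, ?_, ?_⟩
  · have hmem : (⟨fun u => (hd.c.incl i).1 ((hd.proj i).1 u),
        ⟨fun u v => by rw [(hd.proj i).2.map_add, (hd.c.incl i).2.map_add],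
         fun r u => by rw [(hd.proj i).2.map_smul, (hd.c.incl i).2.map_smul]⟩⟩ : LinMap A U U) ∈
        Set.range (nuMap A B U) := by
      rw [hd.nu_range]
      exact ⟨i, hd.c.incl i, rfl⟩
    obtain ⟨b, hb⟩ := hmem
    have hb' : ∀ u : U, b • u = (hd.c.incl i).1 ((hd.proj i).1 u) :=
      fun u => congrFun (congrArg Subtype.val hb) u
    have hββ : b • β = β := by
      refine LinMap.ext (funext fun y => ?_)
      show b • ((hd.c.incl i).1 (h.1 y)) = (hd.c.incl i).1 (h.1 y)
      rw [hb', hd.proj_incl]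
    rw [← hββ]
    exact smul_mem_umax b β
  · show (hd.c.incl i).1 (h.1 x) ≠ 0
    intro h0
    apply hhx
    apply hd.incl_injective i
    rw [h0, (hd.c.incl i).2.map_zero]

end AuxHalfLemmas


set_option linter.unusedSectionVars false

section AuxIdem

variable {A B : Type u} [NonUnitalRing A] [NonUnitalRing B]
variable {U : Type u} [AddCommGroup U] [LMod A U] [LMod B U] [SMulCommClass A B U]
  [SMulCommClass B A U]

/-- The subgroup `eU = {u | e • u = u}` of `U`, for `e ∈ A`. -/
def ueSub (e : A) : AddSubgroup U where
  carrier := {u | e • u = u}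
  add_mem' := by
    intro a b ha hb
    show e • (a + b) = a + b
    rw [LMod.smul_add', ha, hb]
  zero_mem' := LMod.smul_zero' e
  neg_mem' := by
    intro a ha
    show e • (-a) = -a
    rw [LMod.smul_neg', ha]

theorem ueSub_smulB (e : A) (b : B) {u : U} (hu : u ∈ ueSub (U := U) e) :
    b • u ∈ ueSub (U := U) e := by
  show e • (b • u) = b • u
  rw [smul_comm e b u, hu]

theorem mem_principal_self {e : A} (he : e * e = e) : e ∈ principalLeft A e := ⟨e, he.symm⟩

theorem principal_fg {e : A} (he : e * e = e) : IsFG A ↥(principalLeft A e) := by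
  classical
  refine ⟨{⟨e, mem_principal_self he⟩}, fun a => ?_⟩
  obtain ⟨r, hr⟩ := a.2
  have ha : a = r • (⟨e, mem_principal_self he⟩ : ↥(principalLeft A e)) := Subtype.ext hr
  rw [ha]
  exact AddSubgroup.subset_closure (Or.inr ⟨r, ⟨e, mem_principal_self he⟩, by simp, rfl⟩)

theorem principal_unitary [HasLocalUnits A] (e : A) : IsUnitary A ↥(principalLeft A e) := by
  intro a
  obtain ⟨r, hr⟩ := a.2
  obtain ⟨f, -, hf⟩ := HasLocalUnits.exists_unit {r}
  have hfr : f * r = r := (hf r (Finset.mem_singleton_self r)).1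
  have ha : a = f • a := by
    refine Subtype.ext ?_
    show a.1 = f * a.1
    rw [hr, ← mul_assoc, hfr]
  rw [ha]
  exact AddSubgroup.subset_closure ⟨f, a, rfl⟩

/-- The pairing `Ae → U` attached to `u ∈ U`. -/
def pairMap (e : A) (u : U) : LinMap A ↥(principalLeft A e) U :=
  ⟨fun a => a.1 • u, ⟨fun a b => LMod.add_smul' a.1 b.1 u, fun r a => LMod.mul_smul' r a.1 u⟩⟩

theorem pairMap_mem [HasLocalUnits B] (huB : IsUnitary B U) (e : A) (u : U) :
    pairMap e u ∈ umax B (LinMap A ↥(principalLeft A e) U) := by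
  obtain ⟨b, -, hb⟩ := exists_unit_of_unitary huB u
  have hmain : b • pairMap e u = pairMap e u := by
    refine LinMap.ext (funext fun a => ?_)
    show b • (a.1 • u) = a.1 • u
    rw [← smul_comm a.1 b u]
    show a.1 • (b • u) = a.1 • u
    rw [hb]
  rw [← hmain]
  exact smul_mem_umax b _

theorem pairMap_add (e : A) (u v : U) :
    pairMap (A := A) e (u + v) = pairMap e u + pairMap e v :=
  LinMap.ext (funext fun a => LMod.smul_add' a.1 u v)

theorem pairMap_smulB (e : A) (b : B) (u : U) :
    pairMap (A := A) e (b • u) = b • pairMap e u :=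
  LinMap.ext (funext fun a => smul_comm a.1 b u)

/-- Surjectivity of the double-dual evaluation, for the cyclic module `Ae`. -/
theorem cyclic_surj (hdB : HalfData B A U) [HasLocalUnits B] (huB : IsUnitary B U)
    {e : A} (he : e * e = e)
    (Θ : LinMap B ↥(umax B (LinMap A ↥(principalLeft A e) U)) U) :
    ∃ x : ↥(principalLeft A e), ∀ β : ↥(umax B (LinMap A ↥(principalLeft A e) U)),
      Θ.1 β = β.1.1 x := by
  classical
  set α : U → U := fun u => Θ.1 ⟨pairMap e u, pairMap_mem huB e u⟩ with hα
  have hα_add : ∀ u v : U, α (u + v) = α u + α v := by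
    intro u v
    show Θ.1 ⟨pairMap e (u + v), _⟩ = Θ.1 ⟨pairMap e u, _⟩ + Θ.1 ⟨pairMap e v, _⟩
    have harg : (⟨pairMap e (u + v), pairMap_mem huB e (u + v)⟩ :
        ↥(umax B (LinMap A ↥(principalLeft A e) U))) =
        ⟨pairMap e u, pairMap_mem huB e u⟩ + ⟨pairMap e v, pairMap_mem huB e v⟩ := by
      refine Subtype.ext ?_
      show pairMap e (u + v) = pairMap e u + pairMap e v
      exact pairMap_add e u v
    rw [harg, Θ.2.map_add]
  have hα_smul : ∀ (b : B) (u : U), α (b • u) = b • α u := by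
    intro b u
    show Θ.1 ⟨pairMap e (b • u), _⟩ = b • Θ.1 ⟨pairMap e u, _⟩
    have harg : (⟨pairMap e (b • u), pairMap_mem huB e (b • u)⟩ :
        ↥(umax B (LinMap A ↥(principalLeft A e) U))) =
        b • ⟨pairMap e u, pairMap_mem huB e u⟩ := by
      refine Subtype.ext ?_
      show pairMap e (b • u) = b • pairMap e u
      exact pairMap_smulB e b u
    rw [harg, Θ.2.map_smul]
  have hmem : nuMap B A U e ∈ Set.range (nuMap B A U) := ⟨e, rfl⟩
  rw [hdB.nu_range] at hmem
  obtain ⟨k, γe, hγe⟩ := hmem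
  have hγe' : ∀ u : U, e • u = γe.1 ((hdB.proj k).1 u) := fun u => congrFun hγe u
  have hg : (⟨fun v => α (γe.1 ((hdB.proj k).1 v)),
      ⟨fun v w => by rw [(hdB.proj k).2.map_add, γe.2.map_add, hα_add],
       fun b v => by rw [(hdB.proj k).2.map_smul, γe.2.map_smul, hα_smul]⟩⟩ : LinMap B U U) ∈
      Set.range (nuMap B A U) := by
    rw [hdB.nu_range]
    refine ⟨k, ⟨fun q => α (γe.1 q),
      ⟨fun q q' => by rw [γe.2.map_add, hα_add],
       fun b q => by rw [γe.2.map_smul, hα_smul]⟩⟩, rfl⟩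
  obtain ⟨r, hr⟩ := hg
  have hr' : ∀ v : U, r • v = α (e • v) := by
    intro v
    have h1 : r • v = α (γe.1 ((hdB.proj k).1 v)) := congrFun (congrArg Subtype.val hr) v
    rw [h1, ← hγe' v]
  refine ⟨⟨r * e, r, rfl⟩, ?_⟩
  intro β
  set u₀ : U := β.1.1 ⟨e, mem_principal_self he⟩ with hu₀def
  have hu₀ : e • u₀ = u₀ := by
    have h1 : (⟨e, mem_principal_self he⟩ : ↥(principalLeft A e)) =
        e • ⟨e, mem_principal_self he⟩ := Subtype.ext he.symm
    conv_rhs => rw [hu₀def, h1, β.1.2.map_smul]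
  have hβ : β = ⟨pairMap e u₀, pairMap_mem huB e u₀⟩ := by
    refine Subtype.ext (LinMap.ext (funext fun a => ?_))
    obtain ⟨r', hr1⟩ := a.2
    have ha : a = r' • (⟨e, mem_principal_self he⟩ : ↥(principalLeft A e)) := Subtype.ext hr1
    show β.1.1 a = a.1 • u₀
    have h2 : a.1 • u₀ = r' • u₀ := by
      rw [hr1]
      show (r' * e) • u₀ = r' • u₀
      rw [LMod.mul_smul', hu₀]
    rw [h2]
    conv_lhs => rw [ha, β.1.2.map_smul]
  rw [hβ]
  show α u₀ = (pairMap e u₀).1 ⟨r * e, _⟩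
  have h3 : (pairMap e u₀).1 ⟨r * e, (⟨r, rfl⟩ : ∃ s, r * e = s * e)⟩ = r • u₀ := by
    show (r * e) • u₀ = r • u₀
    rw [LMod.mul_smul', hu₀]
  rw [h3, hr' u₀, hu₀]

end AuxIdem


section AuxGenHoms

universe u1 v1 w1

variable {C : Type u1} [NonUnitalRing C]

/-- Evaluation at a point, as an additive homomorphism on hom-groups. -/
def linEvalHom {M : Type v1} {N : Type w1} [AddCommGroup M] [AddCommGroup N]
    [LMod C M] [LMod C N] (m : M) : LinMap C M N →+ N :=
  AddMonoidHom.mk' (fun f => f.1 m) (fun f g => rfl)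

/-- The underlying additive homomorphism of a module homomorphism. -/
def linHom {M : Type v1} {N : Type w1} [AddCommGroup M] [AddCommGroup N]
    [LMod C M] [LMod C N] (f : LinMap C M N) : M →+ N :=
  AddMonoidHom.mk' f.1 f.2.map_add

@[simp] theorem linHom_apply {M : Type v1} {N : Type w1} [AddCommGroup M] [AddCommGroup N]
    [LMod C M] [LMod C N] (f : LinMap C M N) (m : M) : linHom f m = f.1 m := rfl

end AuxGenHoms

section AuxPiSurj

variable {A B : Type u} [NonUnitalRing A] [NonUnitalRing B]
variable {U : Type u} [AddCommGroup U] [LMod A U] [LMod B U] [SMulCommClass A B U]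
  [SMulCommClass B A U]

/-- Precomposition with `p`, as a map of duals. -/
def dualComp {X Y : Type u} [AddCommGroup X] [AddCommGroup Y] [LMod A X] [LMod A Y]
    (p : LinMap A X Y) (β : ↥(umax B (LinMap A Y U))) : ↥(umax B (LinMap A X U)) :=
  ⟨⟨fun x => β.1.1 (p.1 x), ⟨fun x y => by rw [p.2.map_add, β.1.2.map_add],
     fun r x => by rw [p.2.map_smul, β.1.2.map_smul]⟩⟩,
   umax_mapsTo (C := B)
     (fun g => ⟨fun x => g.1 (p.1 x), ⟨fun x y => by rw [p.2.map_add, g.2.map_add],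
        fun r x => by rw [p.2.map_smul, g.2.map_smul]⟩⟩)
     (fun g g' => LinMap.ext (funext fun x => rfl))
     (fun b g => LinMap.ext (funext fun x => rfl)) β.2⟩

@[simp] theorem dualComp_apply {X Y : Type u} [AddCommGroup X] [AddCommGroup Y]
    [LMod A X] [LMod A Y] (p : LinMap A X Y) (β : ↥(umax B (LinMap A Y U))) (x : X) :
    (dualComp (U := U) p β).1.1 x = β.1.1 (p.1 x) := rfl

theorem dualComp_add {X Y : Type u} [AddCommGroup X] [AddCommGroup Y] [LMod A X]
    [LMod A Y] (p : LinMap A X Y) (β β' : ↥(umax B (LinMap A Y U))) :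
    dualComp (U := U) p (β + β') = dualComp p β + dualComp p β' :=
  Subtype.ext (LinMap.ext (funext fun x => rfl))

theorem dualComp_smul {X Y : Type u} [AddCommGroup X] [AddCommGroup Y] [LMod A X]
    [LMod A Y] (p : LinMap A X Y) (b : B) (β : ↥(umax B (LinMap A Y U))) :
    dualComp (U := U) p (b • β) = b • dualComp p β :=
  Subtype.ext (LinMap.ext (funext fun x => rfl))

theorem dualComp_injective {X Y : Type u} [AddCommGroup X] [AddCommGroup Y] [LMod A X]
    [LMod A Y] (p : LinMap A X Y) (hp : Function.Surjective p.1) :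
    Function.Injective (dualComp (B := B) (U := U) p) := by
  intro β β' h
  refine Subtype.ext (LinMap.ext (funext fun y => ?_))
  obtain ⟨x, rfl⟩ := hp y
  exact congrFun (congrArg (fun g : ↥(umax B (LinMap A X U)) => g.1.1) h) x

/-- Surjectivity of evaluation for finite products of cyclic modules `A·eⱼ`. -/
theorem pi_surj (hdB : HalfData B A U) [HasLocalUnits B] (huB : IsUnitary B U)
    {ι : Type u} [Fintype ι] [DecidableEq ι] (E : ι → A) (hE : ∀ j, E j * E j = E j)
    (Θ : LinMap B ↥(umax B (LinMap A (∀ j, ↥(principalLeft A (E j))) U)) U) :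
    ∃ y : ∀ j, ↥(principalLeft A (E j)),
      ∀ β : ↥(umax B (LinMap A (∀ j, ↥(principalLeft A (E j))) U)), Θ.1 β = β.1.1 y := by
  classical
  have hx : ∀ j, ∃ x : ↥(principalLeft A (E j)),
      ∀ γ : ↥(umax B (LinMap A ↥(principalLeft A (E j)) U)),
      Θ.1 (dualComp (piProj j) γ) = γ.1.1 x := by
    intro j
    refine cyclic_surj hdB huB (hE j) ⟨fun γ => Θ.1 (dualComp (piProj j) γ), ?_, ?_⟩
    · intro γ γ'
      rw [dualComp_add, Θ.2.map_add]
    · intro b γ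
      rw [dualComp_smul, Θ.2.map_smul]
  choose y hy using hx
  refine ⟨y, fun β => ?_⟩
  have hβdec : β = ∑ j, dualComp (piProj j) (dualComp (piSingle j) β) := by
    refine Subtype.ext (LinMap.ext (funext fun m => ?_))
    have hval : ((∑ j, dualComp (piProj j) (dualComp (piSingle (M := fun j => ↥(principalLeft A (E j))) j) β) :
        ↥(umax B (LinMap A (∀ j, ↥(principalLeft A (E j))) U))) : LinMap A _ U) =
        ∑ j, (dualComp (piProj j) (dualComp (piSingle (M := fun j => ↥(principalLeft A (E j))) j) β) : ↥(umax B _)).1 :=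
      map_sum (umax B (LinMap A (∀ j, ↥(principalLeft A (E j))) U)).subtype _ Finset.univ
    rw [hval]
    have heval : (∑ j, (dualComp (piProj j) (dualComp (piSingle j) β) : ↥(umax B _)).1).1 m =
        ∑ j, ((dualComp (piProj j) (dualComp (piSingle j) β) : ↥(umax B _)).1).1 m :=
      map_sum (linEvalHom m) _ Finset.univ
    rw [heval]
    have hstep : ∀ j, ((dualComp (piProj j) (dualComp (piSingle j) β) :
        ↥(umax B _)).1).1 m = β.1.1 (Pi.single j (m j)) := fun j => rfl
    have hsum : β.1.1 m = ∑ j, β.1.1 (Pi.single j (m j)) := by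
      conv_lhs => rw [← Finset.univ_sum_single m]
      exact map_sum (linHom β.1) _ Finset.univ
    rw [hsum]
    exact Finset.sum_congr rfl (fun j _ => (hstep j).symm)
  conv_lhs => rw [hβdec]
  have hmap : Θ.1 (∑ j, dualComp (piProj j) (dualComp (piSingle (M := fun j => ↥(principalLeft A (E j))) j) β)) =
      ∑ j, Θ.1 (dualComp (piProj j) (dualComp (piSingle (M := fun j => ↥(principalLeft A (E j))) j) β)) :=
    map_sum (AddMonoidHom.mk' Θ.1 Θ.2.map_add) _ Finset.univ
  rw [hmap]
  have hterm : ∀ j, Θ.1 (dualComp (piProj j) (dualComp (piSingle (M := fun j => ↥(principalLeft A (E j))) j) β)) =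
      β.1.1 (Pi.single j (y j)) := by
    intro j
    rw [hy j (dualComp (piSingle (M := fun j => ↥(principalLeft A (E j))) j) β)]
    rfl
  rw [Finset.sum_congr rfl (fun j _ => hterm j)]
  have : β.1.1 y = ∑ j, β.1.1 (Pi.single j (y j)) := by
    conv_lhs => rw [← Finset.univ_sum_single y]
    exact map_sum (linHom β.1) _ Finset.univ
  rw [this]

end AuxPiSurj


section AuxFGSurj

variable {A B : Type u} [NonUnitalRing A] [NonUnitalRing B]
variable {U : Type u} [AddCommGroup U] [LMod A U] [LMod B U] [SMulCommClass A B U]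
  [SMulCommClass B A U]

/-- Every finitely generated unitary module is covered by a finite product of
cyclic modules `A·eⱼ`. -/
theorem exists_pi_surj [HasLocalUnits A] {X : Type u} [AddCommGroup X] [LMod A X]
    (hX : IsUnitary A X) (hfg : IsFG A X) :
    ∃ (ι : Type u) (_ : Fintype ι) (_ : DecidableEq ι) (E : ι → A)
      (hE : ∀ j, E j * E j = E j) (p : LinMap A (∀ j, ↥(principalLeft A (E j))) X),
      Function.Surjective p.1 := by
  classical
  obtain ⟨s, hs⟩ := hfg
  refine ⟨{x : X // x ∈ s}, inferInstance, Classical.decEq _, ?_⟩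
  have hEx : ∀ j : {x : X // x ∈ s}, ∃ e : A, e * e = e ∧ e • j.1 = j.1 :=
    fun j => exists_unit_of_unitary hX j.1
  choose E hEidem hEj using hEx
  refine ⟨E, hEidem, ?_⟩
  refine ⟨⟨fun a => ∑ j, (a j).1 • j.1, ?_, ?_⟩, ?_⟩
  · intro a a'
    rw [← Finset.sum_add_distrib]
    refine Finset.sum_congr rfl (fun j _ => ?_)
    show (a j + a' j).1 • j.1 = (a j).1 • j.1 + (a' j).1 • j.1
    exact LMod.add_smul' (a j).1 (a' j).1 j.1
  · intro r a
    have h1 : ∀ j : {x : X // x ∈ s}, ((r • a) j).1 • j.1 = r • ((a j).1 • j.1) := by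
      intro j
      show (r * (a j).1) • j.1 = r • ((a j).1 • j.1)
      exact LMod.mul_smul' r (a j).1 j.1
    rw [Finset.sum_congr rfl (fun j _ => h1 j)]
    exact (map_sum (AddMonoidHom.mk' (fun z : X => r • z) (LMod.smul_add' r)) _
      Finset.univ).symm
  · intro x
    set phom : (∀ j : {x : X // x ∈ s}, ↥(principalLeft A (E j))) →+ X :=
      AddMonoidHom.mk' (fun a => ∑ j, (a j).1 • j.1) (by
        intro a a'
        rw [← Finset.sum_add_distrib]
        exact Finset.sum_congr rfl (fun j _ => LMod.add_smul' (a j).1 (a' j).1 j.1))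
      with hphom
    have hK : ∀ (r : A) (z : X), z ∈ phom.range → r • z ∈ phom.range := by
      rintro r z ⟨a, rfl⟩
      refine ⟨r • a, ?_⟩
      show ∑ j, ((r • a) j).1 • j.1 = r • ∑ j, (a j).1 • j.1
      have h1 : ∀ j : {x : X // x ∈ s}, ((r • a) j).1 • j.1 = r • ((a j).1 • j.1) :=
        fun j => LMod.mul_smul' r (a j).1 j.1
      rw [Finset.sum_congr rfl (fun j _ => h1 j)]
      exact (map_sum (AddMonoidHom.mk' (fun z : X => r • z) (LMod.smul_add' r)) _
        Finset.univ).symm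
    have hsK : (↑s : Set X) ⊆ phom.range := by
      intro g hg
      set jg : {x : X // x ∈ s} := ⟨g, hg⟩ with hjg
      set v : ↥(principalLeft A (E jg)) := ⟨E jg, mem_principal_self (hEidem jg)⟩ with hv
      set aa : ∀ j : {x : X // x ∈ s}, ↥(principalLeft A (E j)) := Pi.single jg v with haa
      refine ⟨aa, ?_⟩
      show ∑ j, (aa j).1 • j.1 = g
      rw [Finset.sum_eq_single_of_mem jg (Finset.mem_univ _)]
      · rw [haa, Pi.single_eq_same]
        exact hEj jg
      · intro k _ hk
        rw [haa, Pi.single_eq_of_ne hk]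
        show (0 : A) • k.1 = 0
        exact LMod.zero_smul' k.1
    have := lspan_le hsK hK (hs x)
    obtain ⟨a, ha⟩ := this
    exact ⟨a, ha⟩

/-- Surjectivity of the double-dual evaluation for finitely generated unitary
modules. -/
theorem fg_surj (hdB : HalfData B A U) [HasLocalUnits A] [HasLocalUnits B]
    (huB : IsUnitary B U) {X : Type u} [AddCommGroup X] [LMod A X]
    (hX : IsUnitary A X) (hfg : IsFG A X)
    (Θ : LinMap B ↥(umax B (LinMap A X U)) U)
    (hΘ : Θ ∈ umax A (LinMap B ↥(umax B (LinMap A X U)) U)) :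
    ∃ x : X, ∀ β : ↥(umax B (LinMap A X U)), Θ.1 β = β.1.1 x := by
  classical
  obtain ⟨ι, _, _, E, hE, p, hp⟩ := exists_pi_surj hX hfg
  obtain ⟨a₀, ha₀idem, ha₀⟩ := exists_unit_of_mem_umax hΘ
  have ha₀' : ∀ β, a₀ • Θ.1 β = Θ.1 β := by
    intro β
    have := congrFun (congrArg Subtype.val ha₀) β
    exact this
  have hmem : nuMap B A U a₀ ∈ Set.range (nuMap B A U) := ⟨a₀, rfl⟩
  rw [hdB.nu_range] at hmem
  obtain ⟨k, γa, hγa⟩ := hmem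
  have hγa' : ∀ u : U, a₀ • u = γa.1 ((hdB.proj k).1 u) := fun u => congrFun hγa u
  obtain ⟨m, hmfix⟩ := hdB.exists_fix_map (hdB.fg k) γa
  have himΘ : ∀ β, Θ.1 β ∈ hdB.fix m := by
    intro β
    rw [← ha₀' β, hγa']
    exact hmfix _
  -- bundle objects
  let DXobj : UMod.{u, u} B := ⟨↥(umax B (LinMap A X U)), umax_unitary⟩
  let DFobj : UMod.{u, u} B := ⟨↥(umax B (LinMap A (∀ j, ↥(principalLeft A (E j))) U)),
    umax_unitary⟩
  let θmor : DXobj ⟶ hdB.D.obj m := ⟨fun β => (hdB.proj m).1 (Θ.1 β),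
    ⟨fun β β' => by rw [Θ.2.map_add, (hdB.proj m).2.map_add],
     fun b β => by rw [Θ.2.map_smul, (hdB.proj m).2.map_smul]⟩⟩
  let pstar : DXobj ⟶ DFobj := ⟨dualComp p,
    ⟨dualComp_add p, fun b β => dualComp_smul p b β⟩⟩
  haveI : CategoryTheory.Mono pstar := mono_of_injective pstar (dualComp_injective p hp)
  haveI := hdB.inj m
  obtain ⟨Ξm, hΞm⟩ := CategoryTheory.Injective.factors θmor pstar
  let Ξ : LinMap B ↥(umax B (LinMap A (∀ j, ↥(principalLeft A (E j))) U)) U :=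
    a₀ • ⟨fun βF => (hdB.c.incl m).1 (Ξm.1 βF),
      ⟨fun βF βF' => by rw [Ξm.2.map_add, (hdB.c.incl m).2.map_add],
       fun b βF => by rw [Ξm.2.map_smul, (hdB.c.incl m).2.map_smul]⟩⟩
  obtain ⟨y, hy⟩ := pi_surj hdB huB E hE Ξ
  refine ⟨p.1 y, fun β => ?_⟩
  have h1 : Ξ.1 (dualComp p β) = a₀ • ((hdB.c.incl m).1 (Ξm.1 (dualComp p β))) := rfl
  have h2 : Ξm.1 (dualComp p β) = θmor.1 β := by
    have := congrFun (congrArg Subtype.val hΞm) β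
    exact this
  have h3 : Ξ.1 (dualComp p β) = Θ.1 β := by
    rw [h1, h2]
    show a₀ • ((hdB.c.incl m).1 ((hdB.proj m).1 (Θ.1 β))) = Θ.1 β
    rw [hdB.fix_apply (himΘ β)]
    exact ha₀' β
  have h4 : Ξ.1 (dualComp p β) = β.1.1 (p.1 y) := hy (dualComp p β)
  rw [← h3, h4]

/-- Generic form of the reflexivity theorem. -/
theorem grefl (hdA : HalfData A B U) (hdB : HalfData B A U)
    [HasLocalUnits A] [HasLocalUnits B] (huB : IsUnitary B U)
    {X : Type u} [AddCommGroup X] [LMod A X] (hX : IsUnitary A X) (hfg : IsFG A X) :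
    ∃ h : ∀ x : X,
        gev (A := A) (B := B) (U := U) x ∈ umax A (LinMap B ↥(umax B (LinMap A X U)) U),
      Function.Bijective (fun x : X =>
        (⟨gev x, h x⟩ : ↥(umax A (LinMap B ↥(umax B (LinMap A X U)) U)))) := by
  refine ⟨fun x => gev_mem_umax hX x, ?_, ?_⟩
  · intro x₁ x₂ h12
    by_contra hne
    have hx : x₁ - x₂ ≠ 0 := sub_ne_zero_of_ne hne
    obtain ⟨β, hβmem, hβ⟩ := hdA.separate hX hx
    apply hβ
    have hv : gev (A := A) (B := B) (U := U) x₁ = gev x₂ := congrArg Subtype.val h12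
    have h3 : β.1 x₁ = β.1 x₂ := congrFun (congrArg Subtype.val hv) ⟨β, hβmem⟩
    rw [IsLHom.map_sub' β.2, h3, sub_self]
  · intro Θsub
    obtain ⟨x, hx⟩ := fg_surj hdB huB hX hfg Θsub.1 Θsub.2
    refine ⟨x, ?_⟩
    refine Subtype.ext (LinMap.ext (funext fun β => ?_))
    exact (hx β).symm

end AuxFGSurj


section AuxChains

universe u1 v1 w1

variable {C : Type u1} [NonUnitalRing C]

/-- Chains of stable subgroups have bounded length. -/
def BoundedChains (C : Type u1) [NonUnitalRing C] (M : Type v1) [AddCommGroup M]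
    [LMod C M] : Prop :=
  ∃ n : ℕ, ∀ c : Fin (n + 1) → AddSubgroup M,
    (∀ i (r : C) (x : M), x ∈ c i → r • x ∈ c i) →
    ¬(∀ i : Fin n, c i.castSucc < c i.succ)

theorem lspan_mono {M : Type v1} [AddCommGroup M] [LMod C M] {s t : Set M} (hst : s ⊆ t) :
    lspan C s ≤ lspan C t := by
  refine lspan_le ?_ (fun r x hx => lspan_smul_mem r hx)
  intro x hx
  exact mem_lspan_self (hst hx)

/-- Auxiliary recursion: iteratively insert chosen elements. -/
private def chainF {M : Type v1} [DecidableEq M] (pick : Finset M → M) : ℕ → Finset M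
  | 0 => ∅
  | (k + 1) => insert (pick (chainF pick k)) (chainF pick k)

theorem fg_of_bounded {M : Type v1} [AddCommGroup M] [LMod C M]
    (hb : BoundedChains C M) : IsFG C M := by
  classical
  by_contra hnfg
  have hpick : ∀ s : Finset M, ∃ m : M, m ∉ lspan C (↑s : Set M) := by
    intro s
    by_contra hall
    push_neg at hall
    exact hnfg ⟨s, hall⟩
  obtain ⟨n, hn⟩ := hb
  set F : ℕ → Finset M := chainF (fun s => (hpick s).choose) with hF
  have hFsucc : ∀ k, F (k + 1) = insert ((hpick (F k)).choose) (F k) := fun k => rfl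
  have hFmono : ∀ k, ∀ x : M, x ∈ F k → x ∈ F (k + 1) := by
    intro k x hx
    rw [hFsucc]
    exact Finset.mem_insert_of_mem hx
  have hFstrict : ∀ k, lspan C (↑(F k) : Set M) < lspan C (↑(F (k + 1)) : Set M) := by
    intro k
    refine lt_of_le_of_ne (lspan_mono (fun x hx => hFmono k x hx)) ?_
    intro heq
    apply (hpick (F k)).choose_spec
    have hmem : (hpick (F k)).choose ∈ lspan C (↑(F (k + 1)) : Set M) := by
      refine mem_lspan_self ?_
      show (hpick (F k)).choose ∈ (↑(F (k + 1)) : Set M)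
      rw [hFsucc]
      exact Finset.mem_insert_self _ _
    rw [← heq] at hmem
    exact hmem
  refine hn (fun i => lspan C (↑(F i.1) : Set M))
    (fun i r x hx => lspan_smul_mem r hx) ?_
  intro i
  exact hFstrict i.1

theorem bounded_of_injective {M : Type v1} {N : Type w1} [AddCommGroup M] [AddCommGroup N]
    [LMod C M] [LMod C N] (T : LinMap C M N) (hT : Function.Injective T.1)
    (hb : BoundedChains C N) : BoundedChains C M := by
  obtain ⟨n, hn⟩ := hb
  refine ⟨n, fun c hst hchain => ?_⟩
  refine hn (fun i => (c i).map (linHom T)) ?_ ?_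
  · rintro i r y ⟨x, hx, rfl⟩
    refine ⟨r • x, hst i r x hx, ?_⟩
    rw [linHom_apply, linHom_apply]
    exact T.2.map_smul r x
  · intro i
    show (c i.castSucc).map (linHom T) < (c i.succ).map (linHom T)
    refine lt_of_le_of_ne (AddSubgroup.map_mono (le_of_lt (hchain i))) ?_
    intro heq
    obtain ⟨x, hxj, hxi⟩ := SetLike.exists_of_lt (hchain i)
    apply hxi
    have hmem : T.1 x ∈ (c i.castSucc).map (linHom T) := by
      rw [heq]
      exact ⟨x, hxj, rfl⟩
    obtain ⟨x', hx', hTx⟩ := hmem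
    rw [linHom_apply] at hTx
    rwa [← hT hTx]

theorem bounded_of_antitone {D : Type w1} [NonUnitalRing D] {M : Type v1} {N : Type w1}
    [AddCommGroup M] [AddCommGroup N] [LMod C M] [LMod D N]
    (F : AddSubgroup M → AddSubgroup N)
    (hstab : ∀ V : AddSubgroup M, (∀ (r : C) (x : M), x ∈ V → r • x ∈ V) →
      ∀ (r : D) (y : N), y ∈ F V → r • y ∈ F V)
    (hmono : ∀ V V' : AddSubgroup M, (∀ (r : C) (x : M), x ∈ V → r • x ∈ V) →
      (∀ (r : C) (x : M), x ∈ V' → r • x ∈ V') → V < V' → F V' < F V)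
    (hb : BoundedChains D N) : BoundedChains C M := by
  obtain ⟨n, hn⟩ := hb
  refine ⟨n, fun c hst hchain => ?_⟩
  refine hn (fun i => F (c i.rev)) (fun i => hstab (c i.rev) (hst i.rev)) ?_
  intro i
  show F (c i.castSucc.rev) < F (c i.succ.rev)
  rw [Fin.rev_castSucc, Fin.rev_succ]
  exact hmono (c i.rev.castSucc) (c i.rev.succ) (hst _) (hst _) (hchain i.rev)

end AuxChains


section AuxAnnih

variable {A B : Type u} [NonUnitalRing A] [NonUnitalRing B]
variable {U : Type u} [AddCommGroup U] [LMod A U] [LMod B U] [SMulCommClass A B U]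
  [SMulCommClass B A U]

theorem LMod.neg_smul' {C : Type u} [NonUnitalRing C] {M : Type u} [AddCommGroup M]
    [LMod C M] (r : C) (m : M) : (-r) • m = -(r • m) := by
  have h := LMod.add_smul' r (-r) m
  rw [add_neg_cancel, LMod.zero_smul'] at h
  exact eq_neg_of_add_eq_zero_right h.symm

/-- The `B`-module structure on `eU`. -/
def ueLMod (e : A) : LMod B ↥(ueSub (U := U) e) :=
  (ueSub (U := U) e).lmod (fun b u hu => ueSub_smulB e b hu)

/-- The annihilator of a subgroup of `eU` inside `Ae`. -/
def annih (e : A) (V : AddSubgroup ↥(ueSub (U := U) e)) :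
    AddSubgroup ↥(principalLeft A e) where
  carrier := {a | ∀ v : ↥(ueSub (U := U) e), v ∈ V → a.1 • v.1 = 0}
  add_mem' := by
    intro a b ha hb v hv
    show (a.1 + b.1) • v.1 = 0
    rw [LMod.add_smul', ha v hv, hb v hv, add_zero]
  zero_mem' := by
    intro v hv
    show (0 : A) • v.1 = 0
    exact LMod.zero_smul' v.1
  neg_mem' := by
    intro a ha v hv
    show (-a.1) • v.1 = 0
    rw [LMod.neg_smul', ha v hv, neg_zero]

theorem annih_stable (e : A) (V : AddSubgroup ↥(ueSub (U := U) e)) (r : A)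
    (x : ↥(principalLeft A e)) (hx : x ∈ annih e V) : r • x ∈ annih e V := by
  intro v hv
  show (r * x.1) • v.1 = 0
  rw [LMod.mul_smul', hx v hv, LMod.smul_zero']

/-- Strict antitonicity of the annihilator pairing. -/
theorem annih_strict (hdB : HalfData B A U) [HasLocalUnits A] [HasLocalUnits B]
    (huB : IsUnitary B U) {e : A} (he : e * e = e)
    (V V' : AddSubgroup ↥(ueSub (U := U) e))
    (hV : ∀ (b : B) (x : ↥(ueSub (U := U) e)), x ∈ V →
      (letI := ueLMod (B := B) (U := U) e; b • x) ∈ V)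
    (hV' : ∀ (b : B) (x : ↥(ueSub (U := U) e)), x ∈ V' →
      (letI := ueLMod (B := B) (U := U) e; b • x) ∈ V')
    (hlt : V < V') : annih e V' < annih e V := by
  letI instUe : LMod B ↥(ueSub (U := U) e) := ueLMod e
  letI instV' : LMod B ↥V' := V'.lmod hV'
  have hWstab : ∀ (b : B) (w : ↥V'), w ∈ V.comap V'.subtype → b • w ∈ V.comap V'.subtype := by
    intro b w hw
    exact hV b w.1 hw
  letI instQ : LMod B (↥V' ⧸ V.comap V'.subtype) := quotLMod _ hWstab
  have huUe : IsUnitary B ↥(ueSub (U := U) e) :=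
    isUnitary_sub (ueSub (U := U) e) (fun b u hu => ueSub_smulB e b hu) huB
  have huV' : IsUnitary B ↥V' := isUnitary_sub V' hV' huUe
  have uQ : IsUnitary B (↥V' ⧸ V.comap V'.subtype) :=
    isUnitary_of_surjective (quotMk _ hWstab) (quotMk_surjective _ hWstab) huV'
  obtain ⟨v₀, hv₀V', hv₀V⟩ := SetLike.exists_of_lt hlt
  set vv : ↥V' := ⟨v₀, hv₀V'⟩ with hvv
  set q₀ : ↥V' ⧸ V.comap V'.subtype := QuotientAddGroup.mk vv with hq₀def
  have hq₀ : q₀ ≠ 0 := by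
    rw [hq₀def]
    intro h0
    exact hv₀V ((QuotientAddGroup.eq_zero_iff vv).mp h0)
  let Qobj : UMod.{u, u} B := ⟨↥V' ⧸ V.comap V'.subtype, uQ⟩
  let f₀ : regMod B ⟶ Qobj := ⟨fun b => b • q₀,
    ⟨fun b b' => LMod.add_smul' b b' q₀, fun b b' => LMod.mul_smul' b b' q₀⟩⟩
  have hf₀ : f₀ ≠ 0 := by
    intro hf0
    apply hq₀
    obtain ⟨b, -, hb⟩ := exists_unit_of_unitary uQ q₀
    have h2 : f₀.1 b = (0 : regMod B ⟶ Qobj).1 b := congrFun (congrArg Subtype.val hf0) b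
    have h3 : b • q₀ = 0 := h2
    rw [← hb]
    exact h3
  obtain ⟨U', hU', h, hne⟩ := hdB.cogen (regMod B) Qobj f₀ 0 hf₀
  obtain ⟨i, rfl⟩ := hU'
  have hex : ∃ b₁ : B, h.1 (b₁ • q₀) ≠ 0 := by
    by_contra hall
    push_neg at hall
    apply hne
    refine LinMap.ext (funext fun b => ?_)
    show h.1 (f₀.1 b) = h.1 ((0 : regMod B ⟶ Qobj).1 b)
    have h0 : h.1 ((0 : regMod B ⟶ Qobj).1 b) = 0 := h.2.map_zero
    rw [h0]
    exact hall b
  obtain ⟨b₁, hb₁⟩ := hex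
  set v₁ : ↥V' := b₁ • vv with hv₁def
  have hv₁q : QuotientAddGroup.mk v₁ = b₁ • q₀ := by
    rw [hq₀def, hv₁def]
    exact quot_smul_mk _ hWstab b₁ vv
  let Uobj : UMod.{u, u} B := ⟨U, huB⟩
  let V'obj : UMod.{u, u} B := ⟨↥V', huV'⟩
  let ι2 : V'obj ⟶ Uobj := ⟨fun w => w.1.1, ⟨fun w w' => rfl, fun b w => rfl⟩⟩
  haveI : CategoryTheory.Mono ι2 := by
    refine mono_of_injective ι2 ?_
    intro w w' hww
    exact Subtype.ext (Subtype.ext hww)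
  let g₁ : V'obj ⟶ hdB.D.obj i := ⟨fun w => h.1 (QuotientAddGroup.mk w),
    ⟨fun w w' => h.2.map_add (QuotientAddGroup.mk w) (QuotientAddGroup.mk w'),
     fun b w => by rw [← quot_smul_mk _ hWstab b w, h.2.map_smul]⟩⟩
  haveI := hdB.inj i
  obtain ⟨hhat, hfac⟩ := CategoryTheory.Injective.factors g₁ ι2
  have hmem : nuMap B A U e ∈ Set.range (nuMap B A U) := ⟨e, rfl⟩
  rw [hdB.nu_range] at hmem
  obtain ⟨k, γe, hγe⟩ := hmem
  have hγe' : ∀ u : U, e • u = γe.1 ((hdB.proj k).1 u) := fun u => congrFun hγe u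
  have hg₂ : (⟨fun u => (hdB.c.incl i).1 (hhat.1 (γe.1 ((hdB.proj k).1 u))),
      ⟨fun u v => by
        rw [(hdB.proj k).2.map_add, γe.2.map_add, hhat.2.map_add, (hdB.c.incl i).2.map_add],
       fun b u => by
        rw [(hdB.proj k).2.map_smul, γe.2.map_smul, hhat.2.map_smul,
          (hdB.c.incl i).2.map_smul]⟩⟩ : LinMap B U U) ∈ Set.range (nuMap B A U) := by
    rw [hdB.nu_range]
    refine ⟨k, ⟨fun q => (hdB.c.incl i).1 (hhat.1 (γe.1 q)),
      ⟨fun q q' => by rw [γe.2.map_add, hhat.2.map_add, (hdB.c.incl i).2.map_add],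
       fun b q => by rw [γe.2.map_smul, hhat.2.map_smul, (hdB.c.incl i).2.map_smul]⟩⟩, rfl⟩
  obtain ⟨a, ha⟩ := hg₂
  have haE : ∀ u : U, a • u = (hdB.c.incl i).1 (hhat.1 (e • u)) := by
    intro u
    have h1 : a • u = (hdB.c.incl i).1 (hhat.1 (γe.1 ((hdB.proj k).1 u))) :=
      congrFun (congrArg Subtype.val ha) u
    rw [h1, hγe' u]
  have hee : ∀ u : U, e • (e • u) = e • u := by
    intro u
    rw [← LMod.mul_smul', he]
  have hae : a * e = a := by
    refine hdB.nu_inj (LinMap.ext (funext fun u => ?_))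
    show (a * e) • u = a • u
    rw [LMod.mul_smul', haE (e • u), hee u, ← haE u]
  have hkill : ∀ v : ↥(ueSub (U := U) e), v ∈ V → a • v.1 = 0 := by
    intro v hv
    rw [haE v.1, v.2]
    have hv' : v ∈ V' := le_of_lt hlt hv
    have h5 : hhat.1 v.1 = g₁.1 ⟨v, hv'⟩ := congrFun (congrArg Subtype.val hfac) ⟨v, hv'⟩
    rw [h5]
    show (hdB.c.incl i).1 (h.1 (QuotientAddGroup.mk ⟨v, hv'⟩)) = 0
    have h6 : (QuotientAddGroup.mk (⟨v, hv'⟩ : ↥V') : ↥V' ⧸ V.comap V'.subtype) = 0 :=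
      (QuotientAddGroup.eq_zero_iff _).mpr hv
    rw [h6, h.2.map_zero, (hdB.c.incl i).2.map_zero]
  have hnotkill : a • v₁.1.1 ≠ 0 := by
    rw [haE v₁.1.1, v₁.1.2]
    have h5 : hhat.1 v₁.1.1 = g₁.1 v₁ := congrFun (congrArg Subtype.val hfac) v₁
    rw [h5]
    show (hdB.c.incl i).1 (h.1 (QuotientAddGroup.mk v₁)) ≠ 0
    rw [hv₁q]
    intro h7
    apply hb₁
    apply hdB.incl_injective i
    rw [h7, (hdB.c.incl i).2.map_zero]
  refine lt_of_le_of_ne (fun x hx v hv => hx v (le_of_lt hlt hv)) ?_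
  intro heq
  have haP : (⟨a, ⟨a, hae.symm⟩⟩ : ↥(principalLeft A e)) ∈ annih e V := fun v hv => hkill v hv
  rw [← heq] at haP
  exact hnotkill (haP v₁.1 v₁.2)

end AuxAnnih


section AuxCyc

variable {A B : Type u} [NonUnitalRing A] [NonUnitalRing B]
variable {U : Type u} [AddCommGroup U] [LMod A U] [LMod B U] [SMulCommClass A B U]
  [SMulCommClass B A U]

/-- Chains in `eU` are bounded when chains in `Ae` are (via the annihilator pairing). -/
theorem cyc_bounded_pair (hdB : HalfData B A U) [HasLocalUnits A] [HasLocalUnits B]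
    (huB : IsUnitary B U) {e : A} (he : e * e = e)
    (hbase : BoundedChains A ↥(principalLeft A e)) :
    letI := ueLMod (B := B) (U := U) e
    BoundedChains B ↥(ueSub (U := U) e) := by
  letI := ueLMod (B := B) (U := U) e
  exact bounded_of_antitone (annih e) (fun V hVstab r y hy => annih_stable e V r y hy)
    (fun V V' hV hV' hlt => annih_strict hdB huB he V V' hV hV' hlt) hbase

/-- Chains in `eU` are bounded when the second ring is locally finite
(`eU` is a finitely generated module over it). -/
theorem cyc_bounded_fg (hdB : HalfData B A U) [HasLocalUnits B] (huB : IsUnitary B U)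
    (hlfB : IsLeftLocallyFinite B) {e : A} (he : e * e = e) :
    letI := ueLMod (B := B) (U := U) e
    BoundedChains B ↥(ueSub (U := U) e) := by
  letI := ueLMod (B := B) (U := U) e
  have hmem : nuMap B A U e ∈ Set.range (nuMap B A U) := ⟨e, rfl⟩
  rw [hdB.nu_range] at hmem
  obtain ⟨k, γe, hγe⟩ := hmem
  have hγe' : ∀ u : U, e • u = γe.1 ((hdB.proj k).1 u) := fun u => congrFun hγe u
  have hpf : ∀ q : (hdB.D.obj k).carrier, γe.1 q ∈ ueSub (U := U) e := by
    intro q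
    have h1 : γe.1 q = e • ((hdB.c.incl k).1 q) := by
      conv_lhs => rw [← hdB.proj_incl k q]
      exact (hγe' _).symm
    show e • γe.1 q = γe.1 q
    rw [h1, ← LMod.mul_smul', he]
  let γe' : LinMap B (hdB.D.obj k).carrier ↥(ueSub (U := U) e) :=
    ⟨fun q => ⟨γe.1 q, hpf q⟩,
     ⟨fun q q' => Subtype.ext (γe.2.map_add q q'),
      fun b q => Subtype.ext (γe.2.map_smul b q)⟩⟩
  have hsurj : Function.Surjective γe'.1 := by
    intro v
    refine ⟨(hdB.proj k).1 v.1, Subtype.ext ?_⟩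
    show γe.1 ((hdB.proj k).1 v.1) = v.1
    rw [← hγe' v.1]
    exact v.2
  have hfg : IsFG B ↥(ueSub (U := U) e) := isFG_of_surjective γe' hsurj (hdB.fg k)
  have hu : IsUnitary B ↥(ueSub (U := U) e) :=
    isUnitary_sub (ueSub (U := U) e) (fun b u hu => ueSub_smulB e b hu) huB
  exact hlfB ↥(ueSub (U := U) e) hu hfg

/-- Restriction of dual elements to a submodule is surjective. -/
theorem res_surj (hdA : HalfData A B U) [HasLocalUnits A] [HasLocalUnits B]
    {X : Type u} [AddCommGroup X] [LMod A X] (hX : IsUnitary A X)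
    {V : AddSubgroup X} (hV : ∀ (r : A) (x : X), x ∈ V → r • x ∈ V) :
    letI := V.lmod hV
    ∀ (α' : LinMap A ↥V U), α' ∈ umax B (LinMap A ↥V U) →
      ∃ β : LinMap A X U, β ∈ umax B (LinMap A X U) ∧ ∀ v : ↥V, β.1 v.1 = α'.1 v := by
  letI := V.lmod hV
  intro α' hα'
  obtain ⟨b, -, hb⟩ := exists_unit_of_mem_umax hα'
  have hb' : ∀ v : ↥V, b • (α'.1 v) = α'.1 v := fun v => congrFun (congrArg Subtype.val hb) v
  have hmem : nuMap A B U b ∈ Set.range (nuMap A B U) := ⟨b, rfl⟩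
  rw [hdA.nu_range] at hmem
  obtain ⟨k, γb, hγb⟩ := hmem
  have hγb' : ∀ u : U, b • u = γb.1 ((hdA.proj k).1 u) := fun u => congrFun hγb u
  obtain ⟨m, hm⟩ := hdA.exists_fix_map (hdA.fg k) γb
  have hfixα : ∀ v : ↥V, α'.1 v ∈ hdA.fix m := by
    intro v
    rw [← hb' v, hγb']
    exact hm _
  have huV : IsUnitary A ↥V := isUnitary_sub V hV hX
  let Vobj : UMod.{u, u} A := ⟨↥V, huV⟩
  let Xobj : UMod.{u, u} A := ⟨X, hX⟩
  let ι : Vobj ⟶ Xobj := ⟨fun v => v.1, ⟨fun v v' => rfl, fun r v => rfl⟩⟩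
  haveI : CategoryTheory.Mono ι := mono_of_injective ι (fun v v' hvv => Subtype.ext hvv)
  let β' : Vobj ⟶ hdA.D.obj m := ⟨fun v => (hdA.proj m).1 (α'.1 v),
    ⟨fun v v' => by rw [α'.2.map_add, (hdA.proj m).2.map_add],
     fun r v => by rw [α'.2.map_smul, (hdA.proj m).2.map_smul]⟩⟩
  haveI := hdA.inj m
  obtain ⟨ghat, hghat⟩ := CategoryTheory.Injective.factors β' ι
  refine ⟨b • ⟨fun x => (hdA.c.incl m).1 (ghat.1 x),
    ⟨fun x x' => by rw [ghat.2.map_add, (hdA.c.incl m).2.map_add],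
     fun r x => by rw [ghat.2.map_smul, (hdA.c.incl m).2.map_smul]⟩⟩,
    smul_mem_umax b _, ?_⟩
  intro v
  show b • ((hdA.c.incl m).1 (ghat.1 v.1)) = α'.1 v
  have h5 : ghat.1 v.1 = β'.1 v := congrFun (congrArg Subtype.val hghat) v
  rw [h5]
  show b • ((hdA.c.incl m).1 ((hdA.proj m).1 (α'.1 v))) = α'.1 v
  rw [hdA.fix_apply (hfixα v)]
  exact hb' v

/-- The dual of a cyclic unitary module is finitely generated, given bounded
chains in the corresponding `eU`. -/
theorem dual_cyclic_fg
    (hcyc : ∀ e : A, e * e = e →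
      (letI := ueLMod (B := B) (U := U) e; BoundedChains B ↥(ueSub (U := U) e)))
    [HasLocalUnits A] [HasLocalUnits B]
    {M : Type u} [AddCommGroup M] [LMod A M] (hM : IsUnitary A M) (x₀ : M)
    (hgen : ∀ m : M, m ∈ lspan A ({x₀} : Set M)) :
    IsFG B ↥(umax B (LinMap A M U)) := by
  obtain ⟨e, he, hex₀⟩ := exists_unit_of_unitary hM x₀
  letI := ueLMod (B := B) (U := U) e
  let T : LinMap B ↥(umax B (LinMap A M U)) ↥(ueSub (U := U) e) :=
    ⟨fun β => ⟨β.1.1 x₀, by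
        show e • β.1.1 x₀ = β.1.1 x₀
        rw [← β.1.2.map_smul, hex₀]⟩,
     ⟨fun β β' => Subtype.ext rfl, fun b β => Subtype.ext rfl⟩⟩
  have hT : Function.Injective T.1 := by
    intro β β' hββ
    have h1 : β.1.1 x₀ = β'.1.1 x₀ := congrArg Subtype.val hββ
    refine Subtype.ext (LinMap.ext (funext fun m => ?_))
    let K : AddSubgroup M :=
      { carrier := {z | β.1.1 z = β'.1.1 z}
        add_mem' := by
          intro a c ha hc
          show β.1.1 (a + c) = β'.1.1 (a + c)
          rw [β.1.2.map_add, β'.1.2.map_add, ha, hc]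
        zero_mem' := by
          show β.1.1 0 = β'.1.1 0
          rw [β.1.2.map_zero, β'.1.2.map_zero]
        neg_mem' := by
          intro a ha
          show β.1.1 (-a) = β'.1.1 (-a)
          rw [β.1.2.map_neg, β'.1.2.map_neg, ha] }
    have hKst : ∀ (r : A) (z : M), z ∈ K → r • z ∈ K := by
      intro r z hz
      show β.1.1 (r • z) = β'.1.1 (r • z)
      rw [β.1.2.map_smul, β'.1.2.map_smul]
      exact congrArg (fun w => r • w) hz
    have : lspan A ({x₀} : Set M) ≤ K := by
      refine lspan_le ?_ hKst
      intro z hz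
      rw [Set.mem_singleton_iff] at hz
      subst hz
      exact h1
    exact this (hgen m)
  exact fg_of_bounded (bounded_of_injective T hT (hcyc e he))

/-- Finite generation under extensions. -/
theorem fg_of_ses {C : Type u} [NonUnitalRing C] {M N : Type u} [AddCommGroup M]
    [AddCommGroup N] [LMod C M] [LMod C N] (π : LinMap C M N)
    (hπ : Function.Surjective π.1) (K : Finset M)
    (hker : ∀ m : M, π.1 m = 0 → m ∈ lspan C (↑K : Set M))
    (hN : IsFG C N) : IsFG C M := by
  classical
  obtain ⟨t, ht⟩ := hN
  choose lift hliftspec using hπ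
  refine ⟨K ∪ t.image lift, fun m => ?_⟩
  have hKL : lspan C (↑K : Set M) ≤ lspan C (↑(K ∪ t.image lift) : Set M) :=
    lspan_mono (fun x hx => Finset.mem_union_left _ hx)
  have hstep : ∀ y ∈ lspan C (↑t : Set N),
      ∃ mℓ, mℓ ∈ lspan C (↑(K ∪ t.image lift) : Set M) ∧ π.1 mℓ = y := by
    intro y hy
    induction hy using AddSubgroup.closure_induction with
    | mem z hz =>
      rcases hz with hz | ⟨r, w, hw, rfl⟩
      · refine ⟨lift z, mem_lspan_self ?_, hliftspec z⟩
        exact Finset.mem_union_right _ (Finset.mem_image_of_mem lift hz)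
      · refine ⟨r • lift w, lspan_smul_mem r (mem_lspan_self ?_), ?_⟩
        · exact Finset.mem_union_right _ (Finset.mem_image_of_mem lift hw)
        · rw [π.2.map_smul, hliftspec w]
    | zero => exact ⟨0, zero_mem _, π.2.map_zero⟩
    | add y z hy hz ihy ihz =>
      obtain ⟨my, hmyL, hmyπ⟩ := ihy
      obtain ⟨mz, hmzL, hmzπ⟩ := ihz
      exact ⟨my + mz, add_mem hmyL hmzL, by rw [π.2.map_add, hmyπ, hmzπ]⟩
    | neg y hy ihy =>
      obtain ⟨my, hmyL, hmyπ⟩ := ihy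
      exact ⟨-my, neg_mem hmyL, by rw [π.2.map_neg, hmyπ]⟩
  obtain ⟨mℓ, hmL, hmπ⟩ := hstep (π.1 m) (ht (π.1 m))
  have h0 : π.1 (m - mℓ) = 0 := by rw [IsLHom.map_sub' π.2, hmπ, sub_self]
  have h1 : m - mℓ ∈ lspan C (↑(K ∪ t.image lift) : Set M) := hKL (hker _ h0)
  have h2 : m = (m - mℓ) + mℓ := by abel
  rw [h2]
  exact add_mem h1 hmL

end AuxCyc


section AuxDualFG

variable {A B : Type u} [NonUnitalRing A] [NonUnitalRing B]
variable {U : Type u} [AddCommGroup U] [LMod A U] [LMod B U] [SMulCommClass A B U]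
  [SMulCommClass B A U]

theorem lspan_subtype {X : Type u} [AddCommGroup X] [LMod A X] (s : Finset X) :
    letI := (lspan A (↑s : Set X)).lmod (fun r x hx => lspan_smul_mem r hx)
    ∃ t : Finset ↥(lspan A (↑s : Set X)), t.card ≤ s.card ∧
      ∀ v : ↥(lspan A (↑s : Set X)),
        v ∈ lspan A (↑t : Set ↥(lspan A (↑s : Set X))) := by
  classical
  letI := (lspan A (↑s : Set X)).lmod (fun r x hx => lspan_smul_mem r hx)
  refine ⟨s.attach.image (fun x => ⟨x.1, mem_lspan_self x.2⟩), ?_, ?_⟩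
  · exact le_trans (Finset.card_image_le) (le_of_eq (Finset.card_attach))
  · intro v
    obtain ⟨z, hz⟩ := v
    induction hz using AddSubgroup.closure_induction with
    | mem z hz' =>
      rcases hz' with hz' | ⟨r, y, hy, rfl⟩
      · refine mem_lspan_self ?_
        refine Finset.mem_coe.mpr (Finset.mem_image.mpr ⟨⟨z, hz'⟩, Finset.mem_attach _ _, ?_⟩)
        exact Subtype.ext rfl
      · have heq : (⟨r • y, AddSubgroup.subset_closure (Or.inr ⟨r, y, hy, rfl⟩)⟩ :
            ↥(lspan A (↑s : Set X))) = r • ⟨y, mem_lspan_self hy⟩ := Subtype.ext rfl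
        rw [heq]
        refine lspan_smul_mem r (mem_lspan_self ?_)
        refine Finset.mem_coe.mpr (Finset.mem_image.mpr ⟨⟨y, hy⟩, Finset.mem_attach _ _, ?_⟩)
        exact Subtype.ext rfl
    | zero =>
      have heq : (⟨(0 : X), (lspan A (↑s : Set X)).zero_mem⟩ :
          ↥(lspan A (↑s : Set X))) = 0 := Subtype.ext rfl
      rw [heq]
      exact zero_mem _
    | add x y hx hy ihx ihy =>
      have heq : (⟨x + y, (lspan A (↑s : Set X)).add_mem hx hy⟩ :
          ↥(lspan A (↑s : Set X))) = ⟨x, hx⟩ + ⟨y, hy⟩ := Subtype.ext rfl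
      rw [heq]
      exact add_mem ihx ihy
    | neg x hx ihx =>
      have heq : (⟨-x, (lspan A (↑s : Set X)).neg_mem hx⟩ :
          ↥(lspan A (↑s : Set X))) = -⟨x, hx⟩ := Subtype.ext rfl
      rw [heq]
      exact neg_mem ihx

/-- Main induction: duals of finitely generated unitary modules are finitely
generated, given bounded chains in the `eU`'s. -/
theorem dual_fg_main (hdA : HalfData A B U) [HasLocalUnits A] [HasLocalUnits B]
    (hcyc : ∀ e : A, e * e = e →
      (letI := ueLMod (B := B) (U := U) e; BoundedChains B ↥(ueSub (U := U) e))) :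
    ∀ (n : ℕ) (X : Type u) (instG : AddCommGroup X) (instM : LMod A X)
      (hX : IsUnitary A X) (s : Finset X), s.card ≤ n →
      (∀ m : X, m ∈ lspan A (↑s : Set X)) →
      IsFG B ↥(umax B (LinMap A X U)) := by
  intro n
  induction n with
  | zero =>
    intro X instG instM hX s hcard hs
    have hse : s = ∅ := Finset.card_eq_zero.mp (Nat.le_zero.mp hcard)
    subst hse
    have hzero : ∀ m : X, m = 0 := by
      intro m
      have h1 : lspan A (↑(∅ : Finset X) : Set X) ≤ ⊥ := by
        refine lspan_le ?_ ?_
        · intro x hx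
          simp at hx
        · intro r x hx
          rw [AddSubgroup.mem_bot] at hx ⊢
          rw [hx]
          exact LMod.smul_zero' r
      exact AddSubgroup.mem_bot.mp (h1 (hs m))
    refine ⟨∅, fun β => ?_⟩
    have hβ0 : β = 0 := by
      refine Subtype.ext (LinMap.ext (funext fun x => ?_))
      show β.1.1 x = 0
      rw [hzero x, β.1.2.map_zero]
    rw [hβ0]
    exact zero_mem _
  | succ n ih =>
    intro X instG instM hX s hcard hs
    rcases s.eq_empty_or_nonempty with hse | ⟨x₀, hx₀⟩
    · subst hse
      exact ih X instG instM hX ∅ (Nat.zero_le n) hs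
    · classical
      set s' : Finset X := s.erase x₀ with hs'
      have hins : s = insert x₀ s' := (Finset.insert_erase hx₀).symm
      have hVst : ∀ (r : A) (x : X), x ∈ lspan A (↑s' : Set X) →
          r • x ∈ lspan A (↑s' : Set X) := fun r x hx => lspan_smul_mem r hx
      set V : AddSubgroup X := lspan A (↑s' : Set X) with hV
      letI instV : LMod A ↥V := V.lmod hVst
      letI instQ : LMod A (X ⧸ V) := quotLMod V hVst
      -- IH for the submodule
      obtain ⟨t, htcard, htspan⟩ := lspan_subtype (A := A) s'
      have hcard' : t.card ≤ n := by
        have h1 : s'.card = s.card - 1 := Finset.card_erase_of_mem hx₀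
        omega
      have hfgV : IsFG B ↥(umax B (LinMap A ↥V U)) :=
        ih ↥V _ _ (isUnitary_sub V hVst hX) t hcard' htspan
      -- cyclic quotient
      have hQu : IsUnitary A (X ⧸ V) :=
        isUnitary_of_surjective (quotMk V hVst) (quotMk_surjective V hVst) hX
      have hQgen : ∀ q : X ⧸ V,
          q ∈ lspan A ({QuotientAddGroup.mk x₀} : Set (X ⧸ V)) := by
        intro q
        induction q using Quotient.inductionOn' with
        | h x =>
        have hx := hs x
        induction hx using AddSubgroup.closure_induction with
        | mem z hz' =>
          rcases hz' with hz' | ⟨r, y, hy, rfl⟩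
          · rw [hins] at hz'
            rcases Finset.mem_insert.mp hz' with rfl | hz''
            · exact mem_lspan_self rfl
            · have h2 : (QuotientAddGroup.mk z : X ⧸ V) = 0 :=
                (QuotientAddGroup.eq_zero_iff z).mpr (mem_lspan_self hz'')
              show (QuotientAddGroup.mk z : X ⧸ V) ∈ _
              rw [h2]
              exact zero_mem _
          · show (QuotientAddGroup.mk (r • y) : X ⧸ V) ∈ _
            rw [← quot_smul_mk V hVst r y]
            rw [hins] at hy
            rcases Finset.mem_insert.mp hy with rfl | hy'
            · exact lspan_smul_mem r (mem_lspan_self rfl)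
            · have h2 : (QuotientAddGroup.mk y : X ⧸ V) = 0 :=
                (QuotientAddGroup.eq_zero_iff y).mpr (mem_lspan_self hy')
              rw [h2, LMod.smul_zero']
              exact zero_mem _
        | zero =>
          show (QuotientAddGroup.mk (0 : X) : X ⧸ V) ∈ _
          have h2 : (QuotientAddGroup.mk (0 : X) : X ⧸ V) = 0 := rfl
          rw [h2]
          exact zero_mem _
        | add x y hx hy ihx ihy =>
          show (QuotientAddGroup.mk (x + y) : X ⧸ V) ∈ _
          have h2 : (QuotientAddGroup.mk (x + y) : X ⧸ V) =
              QuotientAddGroup.mk x + QuotientAddGroup.mk y := rfl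
          rw [h2]
          exact add_mem ihx ihy
        | neg x hx ihx =>
          show (QuotientAddGroup.mk (-x) : X ⧸ V) ∈ _
          have h2 : (QuotientAddGroup.mk (-x) : X ⧸ V) = -QuotientAddGroup.mk x := rfl
          rw [h2]
          exact neg_mem ihx
      have hfgQ : IsFG B ↥(umax B (LinMap A (X ⧸ V) U)) :=
        dual_cyclic_fg hcyc hQu (QuotientAddGroup.mk x₀) hQgen
      -- the restriction map and the kernel
      let ι : LinMap A ↥V X := ⟨fun v => v.1, ⟨fun _ _ => rfl, fun _ _ => rfl⟩⟩
      let πres : LinMap B ↥(umax B (LinMap A X U)) ↥(umax B (LinMap A ↥V U)) :=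
        ⟨dualComp ι, ⟨dualComp_add ι, fun b β => dualComp_smul ι b β⟩⟩
      let θ : LinMap B ↥(umax B (LinMap A (X ⧸ V) U)) ↥(umax B (LinMap A X U)) :=
        ⟨dualComp (quotMk V hVst),
         ⟨dualComp_add _, fun b β => dualComp_smul _ b β⟩⟩
      have hsur : Function.Surjective πres.1 := by
        intro α'
        obtain ⟨β, hβmem, hβ⟩ := res_surj (B := B) hdA hX hVst α'.1 α'.2
        refine ⟨⟨β, hβmem⟩, ?_⟩
        refine Subtype.ext (LinMap.ext (funext fun v => ?_))
        exact hβ v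
      obtain ⟨tQ, htQ⟩ := hfgQ
      refine fg_of_ses πres hsur (tQ.image θ.1) ?_ hfgV
      intro βsub h0
      have hkill : ∀ v : ↥V, βsub.1.1 v.1 = 0 := by
        intro v
        have h1 := congrFun (congrArg
          (fun g : ↥(umax B (LinMap A ↥V U)) => g.1.1) h0) v
        exact h1
      have hle : V ≤ (linHom βsub.1).ker := by
        intro x hx
        show linHom βsub.1 x = 0
        rw [linHom_apply]
        exact hkill ⟨x, hx⟩
      let βq : LinMap A (X ⧸ V) U := ⟨QuotientAddGroup.lift V (linHom βsub.1) hle,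
        ⟨fun q q' => (QuotientAddGroup.lift V (linHom βsub.1) hle).map_add q q',
         by
          intro r q
          induction q using Quotient.inductionOn' with
          | h x =>
          show QuotientAddGroup.lift V (linHom βsub.1) hle
              (r • (QuotientAddGroup.mk x : X ⧸ V)) = _
          rw [quot_smul_mk V hVst r x]
          show βsub.1.1 (r • x) = r • βsub.1.1 x
          exact βsub.1.2.map_smul r x⟩⟩
      have hβqmem : βq ∈ umax B (LinMap A (X ⧸ V) U) := by
        obtain ⟨b, -, hb⟩ := exists_unit_of_mem_umax βsub.2
        have hbq : b • βq = βq := by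
          refine LinMap.ext (funext fun q => ?_)
          induction q using Quotient.inductionOn' with
          | h x =>
          show b • βsub.1.1 x = βsub.1.1 x
          exact congrFun (congrArg Subtype.val hb) x
        rw [← hbq]
        exact smul_mem_umax b βq
      have hθeq : θ.1 ⟨βq, hβqmem⟩ = βsub :=
        Subtype.ext (LinMap.ext (funext fun x => rfl))
      have hmem1 : (⟨βq, hβqmem⟩ : ↥(umax B (LinMap A (X ⧸ V) U))) ∈
          lspan B (↑tQ : Set _) := htQ _
      have hmem2 := map_mem_lspan_image θ hmem1
      rw [hθeq] at hmem2
      rwa [← Finset.coe_image] at hmem2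

end AuxDualFG


section AuxConvert

variable {R S : Type u} [NonUnitalRing R] [NonUnitalRing S]
variable {U : Type u} [AddCommGroup U] [LMod R U] [LMod Sᵐᵒᵖ U]
  [SMulCommClass R Sᵐᵒᵖ U] [SMulCommClass Sᵐᵒᵖ R U]

theorem halfdata_of_I_II (h : SatisfiesI_II R S U) : Nonempty (HalfData R Sᵐᵒᵖ U) := by
  obtain ⟨ι, rel, hrefl, htrans, hne, hdir, D, c, proj, hfginj, hcogen, hpi, hsp, hinj,
    hrange⟩ := h
  have hmu : ∀ s : S, muMap R S U s = nuMap R Sᵐᵒᵖ U (op s) :=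
    fun s => LinMap.ext (funext fun x => rfl)
  have hr : Set.range (nuMap R Sᵐᵒᵖ U) = Set.range (muMap R S U) := by
    ext g
    constructor
    · rintro ⟨b, rfl⟩
      refine ⟨b.unop, ?_⟩
      rw [hmu, op_unop]
    · rintro ⟨s, rfl⟩
      exact ⟨op s, (hmu s).symm⟩
  refine ⟨⟨ι, rel, hrefl, fun {i j k} hij hjk => htrans hij hjk, hne, hdir, D, c, proj,
    (fun i => (hfginj i).1), (fun i => (hfginj i).2), hcogen, hpi,
    fun {i j} hij x => hsp hij x, ?_, ?_⟩⟩
  · intro b b' hbb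
    have h1 : muMap R S U b.unop = muMap R S U b'.unop := by
      rw [hmu, hmu, op_unop, op_unop, hbb]
    exact unop_injective (hinj h1)
  · rw [hr, hrange]

theorem halfdata_of_III_IV (h : SatisfiesIII_IV R S U) : Nonempty (HalfData Sᵐᵒᵖ R U) := by
  obtain ⟨ι, rel, hrefl, htrans, hne, hdir, D, c, proj, hfginj, hcogen, hpi, hsp, hinj,
    hrange⟩ := h
  have hla : lambdaMap R S U = nuMap Sᵐᵒᵖ R U :=
    funext (fun r => LinMap.ext (funext fun x => rfl))
  refine ⟨⟨ι, rel, hrefl, fun {i j k} hij hjk => htrans hij hjk, hne, hdir, D, c, proj,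
    (fun i => (hfginj i).1), (fun i => (hfginj i).2), hcogen, hpi,
    fun {i j} hij x => hsp hij x, ?_, ?_⟩⟩
  · rw [← hla]
    exact hinj
  · rw [← hla, hrange]

end AuxConvert

/-! ## STATEMENT 18
Over a Morita duality bimodule, every finitely generated unitary module is
`U`-reflexive; under local finiteness the dual modules are finitely
generated. -/
theorem fg_modules_reflexive_and_duals_fg
    (R S : Type u) [NonUnitalRing R] [NonUnitalRing S]
    [HasLocalUnits R] [HasLocalUnits S]
    (U : Type u) [AddCommGroup U] [LMod R U] [LMod Sᵐᵒᵖ U]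
    [SMulCommClass R Sᵐᵒᵖ U] [SMulCommClass Sᵐᵒᵖ R U]
    (hU : IsMoritaDualityBimod R S U) :
    (∀ (X : Type u) [AddCommGroup X] [LMod R X],
      IsUnitary R X → IsFG R X → IsLReflexive R S U X) ∧
    (∀ (Y : Type u) [AddCommGroup Y] [LMod Sᵐᵒᵖ Y],
      IsUnitary Sᵐᵒᵖ Y → IsFG Sᵐᵒᵖ Y → IsRReflexive R S U Y) ∧
    -- (a): if `R` is left locally finite:
    (IsLeftLocallyFinite R →
      (∀ (X : Type u) [AddCommGroup X] [LMod R X],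
        IsUnitary R X → IsFG R X → IsFG Sᵐᵒᵖ (DHomL R S U X)) ∧
      (∀ (Y : Type u) [AddCommGroup Y] [LMod Sᵐᵒᵖ Y],
        IsUnitary Sᵐᵒᵖ Y → IsFG Sᵐᵒᵖ Y → IsFG R (DHomR R S U Y))) ∧
    -- (b): the same two conclusions if `S` is right locally finite:
    (IsLeftLocallyFinite Sᵐᵒᵖ →
      (∀ (X : Type u) [AddCommGroup X] [LMod R X],
        IsUnitary R X → IsFG R X → IsFG Sᵐᵒᵖ (DHomL R S U X)) ∧
      (∀ (Y : Type u) [AddCommGroup Y] [LMod Sᵐᵒᵖ Y],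
        IsUnitary Sᵐᵒᵖ Y → IsFG Sᵐᵒᵖ Y → IsFG R (DHomR R S U Y))) := by
  obtain ⟨huR, huS, hI, hIII⟩ := hU
  obtain ⟨hdA⟩ := halfdata_of_I_II hI
  obtain ⟨hdB⟩ := halfdata_of_III_IV hIII
  refine ⟨?_, ?_, ?_, ?_⟩
  · intro X _ _ hX hfg
    obtain ⟨h, hbij⟩ := grefl hdA hdB huS hX hfg
    exact ⟨h, hbij⟩
  · intro Y _ _ hY hfg
    obtain ⟨h, hbij⟩ := grefl hdB hdA huR hY hfg
    exact ⟨h, hbij⟩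
  · intro hlf
    constructor
    · intro X _ _ hX hfg
      obtain ⟨s, hs⟩ := hfg
      exact dual_fg_main hdA
        (fun e he => cyc_bounded_pair hdB huS he
          (hlf ↥(principalLeft R e) (principal_unitary e) (principal_fg he)))
        s.card X _ _ hX s le_rfl hs
    · intro Y _ _ hY hfg
      obtain ⟨s, hs⟩ := hfg
      exact dual_fg_main hdB
        (fun f hf => cyc_bounded_fg hdA huR hlf hf)
        s.card Y _ _ hY s le_rfl hs
  · intro hlf
    constructor
    · intro X _ _ hX hfg
      obtain ⟨s, hs⟩ := hfg
      exact dual_fg_main hdA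
        (fun e he => cyc_bounded_fg hdB huS hlf he)
        s.card X _ _ hX s le_rfl hs
    · intro Y _ _ hY hfg
      obtain ⟨s, hs⟩ := hfg
      exact dual_fg_main hdB
        (fun f hf => cyc_bounded_pair hdA huR hf
          (hlf ↥(principalLeft Sᵐᵒᵖ f) (principal_unitary f) (principal_fg hf)))
        s.card Y _ _ hY s le_rfl hs
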